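/- arXiv:2504.01713 — 9 statements merged into one kernel-verified Lean document; each statement's English description precedes it below -/
import Mathlib

section
/- Alice wins if and only if there exists a point x ∈ ℝ^d such that every affine hyperplane through x contains at most half the points of S in each of its two open sides, i.e. 2·|H⁺ ∩ S| ≤ |S| and 2·|H⁻ ∩ S| ≤ |S| for every affine hyperplane H with x ∈ H; moreover, any such point x is a winning point for Alice. -/
/-!
A voter prefers `b` to `a` exactly when it lies beyond the perpendicular bisector of `a` and `b`,
i.e. in the open half-space `⟪y, b - a⟫ > ⟪a, b - a⟫ + ‖b - a‖² / 2`. Hence a point `x` all of whose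
open half-spaces `⟪y, c⟫ > ⟪x, c⟫` hold at most half of the voters wins against every `b`.
Conversely, if some open half-space `⟪y, c⟫ > ⟪a, c⟫` holds more than half of the voters, Bob beats
`a` with `b = a + t • c` for `t > 0` so small that no voter lies between the two hyperplanes.
-/

open scoped RealInnerProductSpace

/-- `claims S a b` is the number of voters in `S` strictly closer to `a` than to `b`.
Thus `V_A(a,b) = claims S a b` and `V_B(a,b) = claims S b a`. -/
noncomputable def claims {d : ℕ} (S : Finset (EuclideanSpace ℝ (Fin d)))
    (a b : EuclideanSpace ℝ (Fin d)) : ℕ :=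
  (S.filter fun x => dist a x < dist b x).card

/-- `a` is a winning point for Alice: `V_A(a,b) ≥ V_B(a,b)` for every `b`. -/
def IsWinningPoint {d : ℕ} (S : Finset (EuclideanSpace ℝ (Fin d)))
    (a : EuclideanSpace ℝ (Fin d)) : Prop :=
  ∀ b : EuclideanSpace ℝ (Fin d), claims S b a ≤ claims S a b

section Geometry

variable {E : Type*} [NormedAddCommGroup E] [InnerProductSpace ℝ E]

theorem dist_add_lt_dist_iff (a c y : E) :
    dist (a + c) y < dist a y ↔ ⟪a, c⟫ + ‖c‖ ^ 2 / 2 < ⟪y, c⟫ := by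
  rw [← pow_lt_pow_iff_left₀ dist_nonneg dist_nonneg two_ne_zero, dist_eq_norm, dist_eq_norm,
    show a + c - y = (a - y) + c by abel, norm_add_sq_real, inner_sub_left]
  constructor <;> intro <;> linarith

theorem dist_lt_dist_add_iff (a c y : E) :
    dist a y < dist (a + c) y ↔ ⟪y, c⟫ < ⟪a, c⟫ + ‖c‖ ^ 2 / 2 := by
  rw [← pow_lt_pow_iff_left₀ dist_nonneg dist_nonneg two_ne_zero, dist_eq_norm, dist_eq_norm,
    show a + c - y = (a - y) + c by abel, norm_add_sq_real, inner_sub_left]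
  constructor <;> intro <;> linarith

def IsHalvingPoint (S : Finset E) (x : E) : Prop :=
  ∀ c : E, 2 * (S.filter fun y => ⟪x, c⟫ < ⟪y, c⟫).card ≤ S.card

theorem isHalvingPoint_iff_forall_hyperplane (S : Finset E) (x : E) :
    IsHalvingPoint S x ↔
      ∀ (c : E) (lam : ℝ), c ≠ 0 → ⟪x, c⟫ = lam →
        2 * (S.filter fun y => lam < ⟪y, c⟫).card ≤ S.card ∧
        2 * (S.filter fun y => ⟪y, c⟫ < lam).card ≤ S.card := by
  constructor
  · rintro h c _ _ rfl
    refine ⟨h c, ?_⟩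
    simpa only [inner_neg_right, neg_lt_neg_iff] using h (-c)
  · intro h c
    by_cases hc : c = 0
    · simp [hc]
    · exact (h c _ hc rfl).1

end Geometry

section Voting

variable {d : ℕ} (S : Finset (EuclideanSpace ℝ (Fin d)))

theorem claims_add_claims_le_card (a b : EuclideanSpace ℝ (Fin d)) :
    claims S a b + claims S b a ≤ S.card := by
  have hsplit := Finset.card_filter_add_card_filter_not (s := S) fun y => dist a y < dist b y
  have hle : claims S b a ≤ (S.filter fun y => ¬dist a y < dist b y).card :=
    Finset.card_le_card <| Finset.monotone_filter_right S fun _ _ h => lt_asymm h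
  unfold claims at hle ⊢
  omega

theorem IsWinningPoint.isHalvingPoint {a : EuclideanSpace ℝ (Fin d)}
    (hw : IsWinningPoint S a) : IsHalvingPoint S a := by
  intro c
  set P := S.filter fun y => ⟪a, c⟫ < ⟪y, c⟫
  have hsmall : ∀ᶠ t in nhdsWithin (0 : ℝ) (Set.Ioi 0),
      0 < t ∧ ∀ y ∈ P, ⟪a, c⟫ + t * ‖c‖ ^ 2 / 2 < ⟪y, c⟫ := by
    refine eventually_mem_nhdsWithin.and (nhdsWithin_le_nhds ?_)
    refine (Filter.eventually_all_finset P).2 fun y hy => ?_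
    have hlim : ContinuousAt (fun t : ℝ => ⟪a, c⟫ + t * ‖c‖ ^ 2 / 2) 0 := by fun_prop
    exact hlim.eventually_lt continuousAt_const (by simpa using (Finset.mem_filter.1 hy).2)
  obtain ⟨t, ht, hP⟩ := hsmall.exists
  have hPle : P.card ≤ claims S (a + t • c) a := by
    refine Finset.card_le_card fun y hy => Finset.mem_filter.2 ⟨(Finset.mem_filter.1 hy).1, ?_⟩
    rw [dist_add_lt_dist_iff, real_inner_smul_right, real_inner_smul_right, norm_smul,
      Real.norm_of_nonneg ht.le]
    nlinarith [hP y hy]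
  have := claims_add_claims_le_card S a (a + t • c)
  have := hw (a + t • c)
  omega

theorem IsHalvingPoint.isWinningPoint {x : EuclideanSpace ℝ (Fin d)}
    (hx : IsHalvingPoint S x) : IsWinningPoint S x := by
  intro b
  obtain ⟨c, rfl⟩ : ∃ c, b = x + c := ⟨b - x, by abel⟩
  rcases eq_or_ne c 0 with rfl | hc
  · simp
  have hB : claims S (x + c) x ≤ (S.filter fun y => ⟪x, c⟫ < ⟪y, c⟫).card := by
    refine Finset.card_le_card <| Finset.monotone_filter_right S fun y _ hy => ?_
    rw [dist_add_lt_dist_iff] at hy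
    linarith [sq_nonneg ‖c‖]
  have hA : (S.filter fun y => ¬⟪x, c⟫ < ⟪y, c⟫).card ≤ claims S x (x + c) := by
    refine Finset.card_le_card <| Finset.monotone_filter_right S fun y _ hy => ?_
    rw [dist_lt_dist_add_iff]
    linarith [not_lt.1 hy, pow_pos (norm_pos_iff.2 hc) 2]
  have := Finset.card_filter_add_card_filter_not (s := S) fun y => ⟪x, c⟫ < ⟪y, c⟫
  have := hx c
  omega

theorem isWinningPoint_iff_isHalvingPoint (x : EuclideanSpace ℝ (Fin d)) :
    IsWinningPoint S x ↔ IsHalvingPoint S x :=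
  ⟨IsWinningPoint.isHalvingPoint S, IsHalvingPoint.isWinningPoint S⟩

end Voting

theorem stmt0_general (d : ℕ) (S : Finset (EuclideanSpace ℝ (Fin d))) :
    ((∃ a, IsWinningPoint S a) ↔
      ∃ x : EuclideanSpace ℝ (Fin d),
        ∀ (c : EuclideanSpace ℝ (Fin d)) (lam : ℝ), c ≠ 0 → ⟪x, c⟫ = lam →
          2 * (S.filter fun y => lam < ⟪y, c⟫).card ≤ S.card ∧
          2 * (S.filter fun y => ⟪y, c⟫ < lam).card ≤ S.card) ∧
    (∀ x : EuclideanSpace ℝ (Fin d),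
      (∀ (c : EuclideanSpace ℝ (Fin d)) (lam : ℝ), c ≠ 0 → ⟪x, c⟫ = lam →
          2 * (S.filter fun y => lam < ⟪y, c⟫).card ≤ S.card ∧
          2 * (S.filter fun y => ⟪y, c⟫ < lam).card ≤ S.card) →
        IsWinningPoint S x) := by
  have key : ∀ x, IsWinningPoint S x ↔ _ := fun x =>
    (isWinningPoint_iff_isHalvingPoint S x).trans (isHalvingPoint_iff_forall_hyperplane S x)
  exact ⟨exists_congr key, fun x hx => (key x).2 hx⟩

/-- Alice wins iff there is a point `x` such that every affine hyperplane
`{y | ⟪y,c⟫ = lam}` through `x` has at most half the points of `S` on each open side;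
moreover any such `x` is a winning point for Alice. -/
theorem stmt0 (d : ℕ) (hd : 1 ≤ d) (S : Finset (EuclideanSpace ℝ (Fin d))) :
    ((∃ a, IsWinningPoint S a) ↔
      ∃ x : EuclideanSpace ℝ (Fin d),
        ∀ (c : EuclideanSpace ℝ (Fin d)) (lam : ℝ), c ≠ 0 → ⟪x, c⟫ = lam →
          2 * (S.filter fun y => lam < ⟪y, c⟫).card ≤ S.card ∧
          2 * (S.filter fun y => ⟪y, c⟫ < lam).card ≤ S.card) ∧
    (∀ x : EuclideanSpace ℝ (Fin d),
      (∀ (c : EuclideanSpace ℝ (Fin d)) (lam : ℝ), c ≠ 0 → ⟪x, c⟫ = lam →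
          2 * (S.filter fun y => lam < ⟪y, c⟫).card ≤ S.card ∧
          2 * (S.filter fun y => ⟪y, c⟫ < lam).card ≤ S.card) →
        IsWinningPoint S x) :=
  stmt0_general d S
end

section
/- Suppose the points of S do not all lie on a single line. Then Alice has at most one winning point: if a₁ and a₂ are both winning points for Alice, then a₁ = a₂. -/
open scoped RealInnerProductSpace

/-!
If Bob stands at `a + ε • v` with `ε` small, he wins exactly the voters in the open halfspace
`⟪a, v⟫ < ⟪x, v⟫`; hence every such halfspace through a winning point contains at most half of
the voters. For two winning points `a₁, a₂` and `⟪a₁, v⟫ < ⟪a₂, v⟫`, the halfspaces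
`⟪a₁, v⟫ < ⟪x, v⟫` and `⟪x, v⟫ < ⟪a₂, v⟫` cover the space, so by counting no voter lies strictly
between them. If `a₁ ≠ a₂`, every voter off the line `a₁a₂` lies strictly between such a pair of
parallel hyperplanes for a suitable `v`, so the voters are collinear.
-/

open Filter Topology Finset

section InnerProductSpace

variable {E : Type*} [NormedAddCommGroup E] [InnerProductSpace ℝ E]

theorem dist_add_smul_sq (a v x : E) (ε : ℝ) :
    dist (a + ε • v) x ^ 2 = dist a x ^ 2 + ε * (ε * ‖v‖ ^ 2 - 2 * ⟪x - a, v⟫) := by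
  rw [dist_eq_norm, dist_eq_norm, add_sub_right_comm, norm_add_sq_real, ← neg_sub x a,
    inner_neg_left, real_inner_smul_right, norm_smul, mul_pow, Real.norm_eq_abs, sq_abs]
  ring

theorem dist_add_smul_lt_dist_iff (a v x : E) {ε : ℝ} (hε : 0 < ε) :
    dist (a + ε • v) x < dist a x ↔ ε * ‖v‖ ^ 2 < 2 * ⟪x - a, v⟫ := by
  rw [← sq_lt_sq₀ dist_nonneg dist_nonneg, dist_add_smul_sq, add_lt_iff_neg_left,
    ← neg_pos, ← mul_neg, mul_pos_iff_of_pos_left hε, neg_pos, sub_neg]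

theorem dist_lt_dist_add_smul_iff (a v x : E) {ε : ℝ} (hε : 0 < ε) :
    dist a x < dist (a + ε • v) x ↔ 2 * ⟪x - a, v⟫ < ε * ‖v‖ ^ 2 := by
  rw [← sq_lt_sq₀ dist_nonneg dist_nonneg, dist_add_smul_sq, lt_add_iff_pos_right,
    mul_pos_iff_of_pos_left hε, sub_pos]

theorem exists_eq_smul_of_forall_inner_notMem_Ioo {u y : E} (hu : u ≠ 0)
    (h : ∀ v, ⟪y, v⟫ ∉ Set.Ioo 0 ⟪u, v⟫) : ∃ r : ℝ, y = r • u := by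
  have hu2 : 0 < ‖u‖ ^ 2 := by positivity
  set r := ⟪y, u⟫ / ‖u‖ ^ 2
  set w := y - r • u
  have hyu : ⟪y, u⟫ = r * ‖u‖ ^ 2 := (div_mul_cancel₀ _ hu2.ne').symm
  have huw : ⟪u, w⟫ = 0 := by
    rw [inner_sub_right, real_inner_smul_right, real_inner_self_eq_norm_sq, real_inner_comm, hyu,
      sub_self]
  have hyw : ⟪y, w⟫ = ‖w‖ ^ 2 := by
    rw [← real_inner_self_eq_norm_sq, ← sub_add_cancel y (r • u), inner_add_left,
      real_inner_smul_left, huw, mul_zero, add_zero]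
  refine ⟨r, ?_⟩
  by_contra hy
  have hw2 : 0 < ‖w‖ ^ 2 := by
    have : w ≠ 0 := sub_ne_zero.2 hy
    positivity
  -- tilt `u` towards the component `w` of `y` orthogonal to `u` until `⟪y, v⟫ = ⟪u, v⟫ / 2`
  set v := u + ((1 / 2 - r) * ‖u‖ ^ 2 / ‖w‖ ^ 2) • w
  have huv : ⟪u, v⟫ = ‖u‖ ^ 2 := by
    rw [inner_add_right, real_inner_smul_right, huw, mul_zero, add_zero,
      real_inner_self_eq_norm_sq]
  have hyv : ⟪y, v⟫ = ‖u‖ ^ 2 / 2 := by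
    rw [inner_add_right, real_inner_smul_right, hyu, hyw, div_mul_cancel₀ _ hw2.ne']
    ring
  exact h v ⟨by rw [hyv]; positivity, by rw [hyv, huv]; linarith⟩

end InnerProductSpace

namespace IsWinningPoint

variable {d : ℕ} {S : Finset (EuclideanSpace ℝ (Fin d))} {a a₁ a₂ : EuclideanSpace ℝ (Fin d)}

theorem two_mul_card_inner_lt_le (h : IsWinningPoint S a) {v : EuclideanSpace ℝ (Fin d)}
    (hv : v ≠ 0) : 2 * #{x ∈ S | ⟪a, v⟫ < ⟪x, v⟫} ≤ #S := by
  obtain ⟨ε, hsmall, hε⟩ : ∃ ε : ℝ,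
      (∀ x ∈ S, 0 < ⟪x - a, v⟫ → ε * ‖v‖ ^ 2 < 2 * ⟪x - a, v⟫) ∧ 0 < ε := by
    refine (((eventually_all_finset S).2 fun x _ => ?_).and
      (self_mem_nhdsWithin : ∀ᶠ ε in 𝓝[>] (0 : ℝ), 0 < ε)).exists
    by_cases hx : 0 < ⟪x - a, v⟫
    · have hlim : Tendsto (fun ε : ℝ => ε * ‖v‖ ^ 2) (𝓝[>] 0) (𝓝 0) :=
        ((continuous_mul_const _).tendsto' 0 0 (zero_mul _)).mono_left nhdsWithin_le_nhds
      exact (hlim.eventually_lt_const (by linarith)).mono fun ε hε _ => hε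
    · exact Eventually.of_forall fun ε hpos => absurd hpos hx
  have hv2 : 0 < ε * ‖v‖ ^ 2 := by positivity
  have hBob : claims S (a + ε • v) a = #{x ∈ S | ⟪a, v⟫ < ⟪x, v⟫} := by
    refine congrArg card (filter_congr fun x hx => ?_)
    rw [dist_add_smul_lt_dist_iff a v x hε, ← sub_pos (a := ⟪x, v⟫), ← inner_sub_left]
    exact ⟨fun hlt => by linarith, hsmall x hx⟩
  have hAlice : claims S a (a + ε • v) = #{x ∈ S | ¬ ⟪a, v⟫ < ⟪x, v⟫} := by
    refine congrArg card (filter_congr fun x hx => ?_)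
    rw [dist_lt_dist_add_smul_iff a v x hε, ← sub_pos (a := ⟪x, v⟫), ← inner_sub_left]
    exact ⟨fun hlt hpos => (hsmall x hx hpos).not_gt hlt, fun hpos => by linarith [not_lt.1 hpos]⟩
  have hwin := h (a + ε • v)
  have hsplit := card_filter_add_card_filter_not (s := S) fun x => ⟪a, v⟫ < ⟪x, v⟫
  rw [hBob, hAlice] at hwin
  omega

theorem inner_notMem_Ioo (h₁ : IsWinningPoint S a₁) (h₂ : IsWinningPoint S a₂)
    {x : EuclideanSpace ℝ (Fin d)} (hx : x ∈ S) (v : EuclideanSpace ℝ (Fin d)) :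
    ⟪x, v⟫ ∉ Set.Ioo ⟪a₁, v⟫ ⟪a₂, v⟫ := by
  rintro ⟨hlo, hhi⟩
  have hv : v ≠ 0 := by
    rintro rfl
    simp at hlo
  have hA := h₁.two_mul_card_inner_lt_le hv
  have hB := h₂.two_mul_card_inner_lt_le (neg_ne_zero.2 hv)
  simp only [inner_neg_right, neg_lt_neg_iff] at hB
  have hcover : {y ∈ S | ⟪a₁, v⟫ < ⟪y, v⟫ ∨ ⟪y, v⟫ < ⟪a₂, v⟫} = S :=
    filter_true_of_mem fun y _ => (lt_or_ge _ _).imp_right fun hy => hy.trans_lt (hlo.trans hhi)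
  have hshared : 0 < #{y ∈ S | ⟪a₁, v⟫ < ⟪y, v⟫ ∧ ⟪y, v⟫ < ⟪a₂, v⟫} :=
    card_pos.2 ⟨x, mem_filter.2 ⟨hx, hlo, hhi⟩⟩
  have hincl := card_union_add_card_inter {y ∈ S | ⟪a₁, v⟫ < ⟪y, v⟫} {y ∈ S | ⟪y, v⟫ < ⟪a₂, v⟫}
  rw [← filter_or, ← filter_and, hcover] at hincl
  omega

end IsWinningPoint

theorem stmt1_general (d : ℕ) (S : Finset (EuclideanSpace ℝ (Fin d)))
    (hline : ¬ Collinear ℝ (S : Set (EuclideanSpace ℝ (Fin d))))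
    (a₁ a₂ : EuclideanSpace ℝ (Fin d))
    (h₁ : IsWinningPoint S a₁) (h₂ : IsWinningPoint S a₂) :
    a₁ = a₂ := by
  by_contra hne
  refine hline ((collinear_iff_exists_forall_eq_smul_vadd _).2 ⟨a₁, a₂ - a₁, fun p hp => ?_⟩)
  have hslab (v) : ⟪p - a₁, v⟫ ∉ Set.Ioo 0 ⟪a₂ - a₁, v⟫ := by
    rw [inner_sub_left, inner_sub_left, Set.mem_Ioo, sub_pos, sub_lt_sub_iff_right]
    exact h₁.inner_notMem_Ioo h₂ hp v
  obtain ⟨r, hr⟩ := exists_eq_smul_of_forall_inner_notMem_Ioo (sub_ne_zero.2 (Ne.symm hne)) hslab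
  exact ⟨r, by rw [vadd_eq_add, ← hr, sub_add_cancel]⟩

/-- if the voters are not all collinear, Alice has at most one winning point. -/
theorem stmt1 (d : ℕ) (hd : 1 ≤ d) (S : Finset (EuclideanSpace ℝ (Fin d)))
    (hline : ¬ Collinear ℝ (S : Set (EuclideanSpace ℝ (Fin d))))
    (a₁ a₂ : EuclideanSpace ℝ (Fin d))
    (h₁ : IsWinningPoint S a₁) (h₂ : IsWinningPoint S a₂) :
    a₁ = a₂ :=
  stmt1_general d S hline a₁ a₂ h₁ h₂
end

section
/- If |S| is even, then for every a ∈ ℝ^d there exists b ∈ ℝ^d with b ≠ a such that 2·V_B(a,b) ≥ |S|; that is, even when forbidden from choosing b = a, Bob can always claim at least half of the voters. -/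
/-!
Pick a direction `u ≠ 0` orthogonal to none of the vectors `x - a` with `x ∈ S`, `x ≠ a`
(a finite union of hyperplanes does not cover the space). Then every voter other than `a` lies
strictly on one side of the hyperplane through `a` normal to `u`, so one of the two open
half-spaces holds at least `(|S| - 1) / 2` voters, hence at least `|S| / 2` as `|S|` is even.
Moving from `a` a small distance towards that half-space gives a point `b ≠ a` strictly closer
than `a` to every voter in it.
-/

open scoped RealInnerProductSpace

open Filter Topology

section InnerProductSpace

variable {E : Type*} [NormedAddCommGroup E] [InnerProductSpace ℝ E]

theorem exists_ne_zero_forall_inner_ne_zero [Nontrivial E] {ι : Type*} [Finite ι] (v : ι → E)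
    (hv : ∀ i, v i ≠ 0) : ∃ u : E, u ≠ 0 ∧ ∀ i, ⟪v i, u⟫ ≠ 0 := by
  -- the extra functional `⟪w, ·⟫` forces `u ≠ 0`, also when `ι` is empty
  obtain ⟨w, hw⟩ := exists_ne (0 : E)
  let v' : Option ι → E := fun o => o.elim w v
  have hv' : ∀ o, ∃ x, innerₛₗ ℝ (v' o) x ≠ 0 := fun o =>
    ⟨v' o, by cases o <;> simp [v', hw, hv]⟩
  obtain ⟨u, hu⟩ := Module.Dual.exists_forall_ne_zero_of_forall_exists _ hv'
  exact ⟨u, fun h => hu none (by simp [h]), fun i => hu (some i)⟩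

theorem dist_add_smul_lt_dist {a x u : E} {t : ℝ} (ht : 0 < t)
    (h : t * ‖u‖ ^ 2 < 2 * ⟪x - a, u⟫) : dist (a + t • u) x < dist a x := by
  have hsq : ‖a + t • u - x‖ ^ 2 = ‖a - x‖ ^ 2 - t * (2 * ⟪x - a, u⟫ - t * ‖u‖ ^ 2) := by
    rw [show a + t • u - x = (a - x) + t • u by abel, norm_add_sq_real, real_inner_smul_right,
      norm_smul, mul_pow, Real.norm_eq_abs, sq_abs, ← neg_sub x a, inner_neg_left]
    ring
  rw [dist_eq_norm, dist_eq_norm]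
  refine lt_of_pow_lt_pow_left₀ 2 (norm_nonneg _) ?_
  rw [hsq]
  nlinarith

theorem eventually_forall_dist_add_smul_lt (S : Finset E) (a u : E) :
    ∀ᶠ t in 𝓝[>] (0 : ℝ), ∀ x ∈ S.filter (fun x => 0 < ⟪x - a, u⟫),
      dist (a + t • u) x < dist a x := by
  rw [Finset.eventually_all]
  intro x hx
  have hpos : 0 < ⟪x - a, u⟫ := (Finset.mem_filter.mp hx).2
  have hsmall : ∀ᶠ t in 𝓝 (0 : ℝ), t * ‖u‖ ^ 2 < 2 * ⟪x - a, u⟫ :=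
    ((continuous_id.mul continuous_const).tendsto' 0 0 (by simp)).eventually
      (gt_mem_nhds (by linarith))
  filter_upwards [nhdsWithin_le_nhds hsmall, self_mem_nhdsWithin] with t ht ht0
  exact dist_add_smul_lt_dist ht0 ht

theorem card_le_card_filter_inner_pos_add (S : Finset E) (a u : E)
    (hgen : ∀ x ∈ S, x ≠ a → ⟪x - a, u⟫ ≠ 0) :
    S.card ≤ (S.filter fun x => 0 < ⟪x - a, u⟫).card
      + (S.filter fun x => 0 < ⟪x - a, -u⟫).card + 1 := by
  classical
  have hrest : (S.filter fun x => ¬ 0 < ⟪x - a, u⟫) ⊆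
      insert a (S.filter fun x => 0 < ⟪x - a, -u⟫) := by
    intro x hx
    obtain ⟨hxS, hx⟩ := Finset.mem_filter.mp hx
    rcases eq_or_ne x a with rfl | hxa
    · exact Finset.mem_insert_self _ _
    · refine Finset.mem_insert_of_mem (Finset.mem_filter.mpr ⟨hxS, ?_⟩)
      rw [inner_neg_right]
      exact neg_pos.mpr (lt_of_le_of_ne (not_lt.mp hx) (hgen x hxS hxa))
  rw [← Finset.card_filter_add_card_filter_not (fun x => 0 < ⟪x - a, u⟫), add_assoc]
  exact Nat.add_le_add_left ((Finset.card_le_card hrest).trans (Finset.card_insert_le _ _)) _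

end InnerProductSpace

variable {d : ℕ}

theorem exists_ne_card_filter_inner_pos_le_claims (S : Finset (EuclideanSpace ℝ (Fin d)))
    (a : EuclideanSpace ℝ (Fin d)) {u : EuclideanSpace ℝ (Fin d)} (hu : u ≠ 0) :
    ∃ b, b ≠ a ∧ (S.filter fun x => 0 < ⟪x - a, u⟫).card ≤ claims S b a := by
  obtain ⟨t, hclose, ht⟩ :=
    ((eventually_forall_dist_add_smul_lt S a u).and self_mem_nhdsWithin).exists
  refine ⟨a + t • u, by simpa using ⟨ne_of_gt ht, hu⟩, Finset.card_le_card fun x hx => ?_⟩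
  exact Finset.mem_filter.mpr ⟨(Finset.mem_filter.mp hx).1, hclose x hx⟩

/-- if `|S|` is even then for every `a` Bob has a reply `b ≠ a`
claiming at least half the voters: `2 * V_B(a,b) ≥ |S|`. -/
theorem stmt2 (d : ℕ) (hd : 1 ≤ d) (S : Finset (EuclideanSpace ℝ (Fin d)))
    (heven : Even S.card) :
    ∀ a : EuclideanSpace ℝ (Fin d), ∃ b : EuclideanSpace ℝ (Fin d),
      b ≠ a ∧ S.card ≤ 2 * claims S b a := by
  intro a
  have : Nonempty (Fin d) := ⟨⟨0, hd⟩⟩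
  obtain ⟨u, hu, hgen⟩ := exists_ne_zero_forall_inner_ne_zero
    (fun x : S.erase a => (x : EuclideanSpace ℝ (Fin d)) - a)
    fun x => sub_ne_zero.mpr (Finset.ne_of_mem_erase x.2)
  have hcard := card_le_card_filter_inner_pos_add S a u
    fun x hx hxa => hgen ⟨x, Finset.mem_erase.mpr ⟨hxa, hx⟩⟩
  obtain ⟨k, hk⟩ := heven
  obtain ⟨b, hba, hb⟩ := exists_ne_card_filter_inner_pos_le_claims S a hu
  obtain ⟨b', hba', hb'⟩ := exists_ne_card_filter_inner_pos_le_claims S a (neg_ne_zero.mpr hu)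
  rcases le_total (S.filter fun x => 0 < ⟪x - a, -u⟫).card
    (S.filter fun x => 0 < ⟪x - a, u⟫).card with hle | hle
  · exact ⟨b, hba, by omega⟩
  · exact ⟨b', hba', by omega⟩
end

section
/- Let d ≥ 2 and suppose |S| is odd. Then Alice wins if and only if there exists a point x ∈ S such that every line through x is even-balanced about x; moreover, any such x is a winning point for Alice. -/
/-!
By the law of cosines a voter `y` strictly prefers `b` to `a` iff
`‖b - a‖² < 2 ⟪y - a, b - a⟫`. Letting `b → a` along `u`, a point `a` is winning iff every open
half-space bounded by a hyperplane through `a` contains at most half of `S`.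

If every line through `x` is even-balanced, the rays from `x` pair off across any hyperplane
through `x`, so opposite open half-spaces hold equally many voters and `x` wins.

Conversely let `a` win with `|S|` odd. A hyperplane through `a` avoiding `S` would split `S` into
two halves, so `a ∈ S`. For a line `a + ℝ v`, pick `w ⊥ v` such that the hyperplane `⟪· - a, w⟫ = 0`
meets `S` only on the line, and tilt it to `w ± ε v`. The tilted hyperplanes meet `S` only in `a`,
so each of their open half-spaces holds exactly `(|S| - 1) / 2` voters: those with
`⟪y - a, w⟫ > 0` together with the voters on the ray `a + ℝ_{>0} (± v)`. Hence both rays carry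
equally many voters.
-/

open scoped RealInnerProductSpace

open scoped Classical in
/-- The number of points of `S` on the open half-line `{x + t • v : t > 0}`. -/
noncomputable def rayCount {d : ℕ} (S : Finset (EuclideanSpace ℝ (Fin d)))
    (x v : EuclideanSpace ℝ (Fin d)) : ℕ :=
  (S.filter fun y => ∃ t : ℝ, 0 < t ∧ y = x + t • v).card

open Finset Filter Topology
open scoped Pointwise

lemma exists_pos_forall_mul_lt {ι : Type*} (s : Finset ι) (c f : ι → ℝ)
    (hf : ∀ i ∈ s, 0 < f i) : ∃ ε > 0, ∀ i ∈ s, ε * c i < f i := by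
  have hsmall : ∀ᶠ ε in 𝓝[>] (0 : ℝ), ∀ i ∈ s, ε * c i < f i := by
    refine (eventually_all_finset s).2 fun i hi => ?_
    have := (continuous_mul_const (c i)).tendsto' 0 0 (zero_mul _)
    exact (this.eventually (gt_mem_nhds (hf i hi))).filter_mono nhdsWithin_le_nhds
  exact (hsmall.and self_mem_nhdsWithin).exists.imp fun ε h => ⟨h.2, h.1⟩

lemma add_mul_pos_iff_of_mul_abs_lt {α β ε : ℝ} (hε : 0 < ε) (h : α ≠ 0 → ε * |β| < |α|) :
    0 < α + ε * β ↔ 0 < α ∨ α = 0 ∧ 0 < β := by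
  rcases eq_or_ne α 0 with rfl | hα
  · simp [mul_pos_iff_of_pos_left hε]
  have hsmall : |ε * β| < |α| := by rw [abs_mul, abs_of_pos hε]; exact h hα
  rcases hα.lt_or_gt with hα | hα
  · rw [abs_of_neg hα, abs_lt] at hsmall
    constructor <;> intro <;> [linarith; grind]
  · rw [abs_of_pos hα, abs_lt] at hsmall
    exact ⟨fun _ => Or.inl hα, fun _ => by linarith⟩

lemma add_mul_eq_zero_iff_of_mul_abs_lt {α β ε : ℝ} (hε : 0 < ε) (h : α ≠ 0 → ε * |β| < |α|) :
    α + ε * β = 0 ↔ α = 0 ∧ β = 0 := by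
  rcases eq_or_ne α 0 with rfl | hα
  · simp [hε.ne']
  have hsmall := h hα
  refine ⟨fun h' => ?_, fun h' => absurd h'.1 hα⟩
  rw [eq_neg_of_add_eq_zero_left h', abs_neg, abs_mul, abs_of_pos hε] at hsmall
  exact absurd hsmall (lt_irrefl _)

section InnerProductSpace

variable {E : Type*} [NormedAddCommGroup E] [InnerProductSpace ℝ E]

lemma exists_mem_orthogonal_forall_inner_ne_zero (K : Submodule ℝ E)
    [K.HasOrthogonalProjection] (T : Finset E) (hT : ∀ z ∈ T, z ∉ K) :
    ∃ w ∈ Kᗮ, ∀ z ∈ T, ⟪z, w⟫ ≠ 0 := by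
  have hwit (z : T) : ∃ w ∈ Kᗮ, innerₗ E (z : E) w ≠ 0 := by
    have hz := hT z z.2
    rw [← K.orthogonal_orthogonal, Submodule.mem_orthogonal] at hz
    simp only [not_forall] at hz
    obtain ⟨w, hw, hzw⟩ := hz
    exact ⟨w, hw, by rwa [innerₗ_apply_apply, real_inner_comm]⟩
  obtain ⟨w, hw, hne⟩ := Module.Dual.exists_forall_mem_ne_zero_of_forall_exists Kᗮ _ hwit
  exact ⟨w, hw, fun z hz => hne ⟨z, hz⟩⟩

lemma dist_sq_eq_dist_sq_add (a b y : E) :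
    dist b y ^ 2 = dist a y ^ 2 + (‖b - a‖ ^ 2 - 2 * ⟪y - a, b - a⟫) := by
  rw [dist_eq_norm, dist_eq_norm, show b - y = (b - a) - (y - a) by abel, norm_sub_sq_real,
    ← norm_neg (a - y), neg_sub, real_inner_comm]
  ring

noncomputable def halfSpaceCount (S : Finset E) (a u : E) : ℕ := #{y ∈ S | 0 < ⟪y - a, u⟫}

lemma halfSpaceCount_add_halfSpaceCount_neg_add_card (S : Finset E) (a u : E) :
    halfSpaceCount S a u + halfSpaceCount S a (-u) + #{y ∈ S | ⟪y - a, u⟫ = 0} = #S := by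
  rw [halfSpaceCount, halfSpaceCount, card_filter, card_filter, card_filter, card_eq_sum_ones,
    ← sum_add_distrib, ← sum_add_distrib]
  refine sum_congr rfl fun y _ => ?_
  rcases lt_trichotomy ⟪y - a, u⟫ 0 with h | h | h
  · simp [inner_neg_right, h, h.not_gt, h.ne]
  · simp [h]
  · simp [inner_neg_right, h, h.not_gt, h.ne']

lemma exists_pos_eq_add_smul_iff {a v : E} (hv : v ≠ 0) (y : E) :
    (∃ t : ℝ, 0 < t ∧ y = a + t • v) ↔ y - a ∈ ℝ ∙ v ∧ 0 < ⟪y - a, v⟫ := by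
  have hvv : 0 < ⟪v, v⟫ := real_inner_self_pos.2 hv
  rw [Submodule.mem_span_singleton]
  constructor
  · rintro ⟨t, ht, rfl⟩
    rw [add_sub_cancel_left, real_inner_smul_left]
    exact ⟨⟨t, rfl⟩, by positivity⟩
  · rintro ⟨⟨t, ht⟩, hpos⟩
    rw [← ht, real_inner_smul_left] at hpos
    exact ⟨t, pos_of_mul_pos_left hpos hvv.le, eq_add_of_sub_eq' ht.symm⟩

open scoped Classical in
lemma halfSpaceCount_add_smul {S : Finset E} {a v w : E} {ε : ℝ} (hv : v ≠ 0)
    (hw : w ∈ (ℝ ∙ v)ᗮ) (hline : ∀ y ∈ S, ⟪y - a, w⟫ = 0 → y - a ∈ ℝ ∙ v) (hε : 0 < ε)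
    (hsep : ∀ y ∈ S, ⟪y - a, w⟫ ≠ 0 → ε * |⟪y - a, v⟫| < |⟪y - a, w⟫|) :
    halfSpaceCount S a (w + ε • v) =
      halfSpaceCount S a w + #{y ∈ S | ∃ t : ℝ, 0 < t ∧ y = a + t • v} := by
  have hdisj : Disjoint {y ∈ S | 0 < ⟪y - a, w⟫} {y ∈ S | ∃ t : ℝ, 0 < t ∧ y = a + t • v} := by
    refine disjoint_filter.2 fun y _ hpos hray => hpos.ne' ?_
    exact Submodule.inner_right_of_mem_orthogonal ((exists_pos_eq_add_smul_iff hv y).1 hray).1 hw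
  rw [halfSpaceCount, halfSpaceCount, ← card_union_of_disjoint hdisj, ← filter_or]
  refine congrArg card (filter_congr fun y hy => ?_)
  rw [inner_add_right, real_inner_smul_right, add_mul_pos_iff_of_mul_abs_lt hε (hsep y hy),
    exists_pos_eq_add_smul_iff hv]
  exact or_congr_right (and_congr_left fun _ =>
    ⟨hline y hy, fun h => Submodule.inner_right_of_mem_orthogonal h hw⟩)

lemma card_filter_inner_add_smul_eq_zero_le_one {S : Finset E} {a v w : E} {ε : ℝ}
    (hline : ∀ y ∈ S, ⟪y - a, w⟫ = 0 → y - a ∈ ℝ ∙ v) (hε : 0 < ε)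
    (hsep : ∀ y ∈ S, ⟪y - a, w⟫ ≠ 0 → ε * |⟪y - a, v⟫| < |⟪y - a, w⟫|) :
    #{y ∈ S | ⟪y - a, w + ε • v⟫ = 0} ≤ 1 := by
  have heq : ∀ y ∈ {y ∈ S | ⟪y - a, w + ε • v⟫ = 0}, y = a := by
    intro y hy
    rw [mem_filter, inner_add_right, real_inner_smul_right,
      add_mul_eq_zero_iff_of_mul_abs_lt hε (hsep y hy.1)] at hy
    obtain ⟨hyS, hw0, hv0⟩ := hy
    have hperp : y - a ∈ (ℝ ∙ v)ᗮ := Submodule.mem_orthogonal_singleton_iff_inner_left.2 hv0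
    exact sub_eq_zero.1 (inner_self_eq_zero.1
      (Submodule.inner_right_of_mem_orthogonal (hline y hyS hw0) hperp))
  exact card_le_one.2 fun y hy z hz => (heq y hy).trans (heq z hz).symm

lemma exists_pos_eq_add_smul_iff_inv_norm_smul {x w : E} (hw : ‖w‖ = 1) (y : E) :
    (∃ t : ℝ, 0 < t ∧ y = x + t • w) ↔ y ≠ x ∧ ‖y - x‖⁻¹ • (y - x) = w := by
  constructor
  · rintro ⟨t, ht, rfl⟩
    have hw0 : w ≠ 0 := by rintro rfl; simp at hw
    refine ⟨by simp [ht.ne', hw0], ?_⟩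
    rw [add_sub_cancel_left, norm_smul, hw, mul_one, Real.norm_of_nonneg ht.le, smul_smul,
      inv_mul_cancel₀ ht.ne', one_smul]
  · rintro ⟨hyx, rfl⟩
    have hpos : 0 < ‖y - x‖ := norm_pos_iff.2 (sub_ne_zero.2 hyx)
    refine ⟨‖y - x‖, hpos, ?_⟩
    rw [smul_smul, mul_inv_cancel₀ hpos.ne', one_smul, add_sub_cancel]

open scoped Classical in
lemma halfSpaceCount_eq_sum_card_ray (S : Finset E) (x u : E) {D : Finset E}
    (hD : ∀ y ∈ S, y ≠ x → ‖y - x‖⁻¹ • (y - x) ∈ D) (hunit : ∀ w ∈ D, ‖w‖ = 1) :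
    halfSpaceCount S x u =
      ∑ w ∈ D with 0 < ⟪w, u⟫, #{y ∈ S | ∃ t : ℝ, 0 < t ∧ y = x + t • w} := by
  have hne : ∀ y, 0 < ⟪y - x, u⟫ → y ≠ x := by rintro y hpos rfl; simp at hpos
  have hmaps : Set.MapsTo (fun y => ‖y - x‖⁻¹ • (y - x))
      (({y ∈ S | 0 < ⟪y - x, u⟫} : Finset E) : Set E)
      (({w ∈ D | 0 < ⟪w, u⟫} : Finset E) : Set E) := by
    intro y hy
    rw [mem_coe, mem_filter] at hy ⊢
    refine ⟨hD y hy.1 (hne y hy.2), ?_⟩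
    rw [real_inner_smul_left]
    exact mul_pos (inv_pos.2 (norm_pos_iff.2 (sub_ne_zero.2 (hne y hy.2)))) hy.2
  rw [halfSpaceCount, card_eq_sum_card_fiberwise hmaps]
  refine sum_congr rfl fun w hw => ?_
  rw [mem_filter] at hw
  rw [filter_filter]
  refine congrArg card (filter_congr fun y _ => ?_)
  rw [exists_pos_eq_add_smul_iff_inv_norm_smul (hunit w hw.1)]
  refine ⟨fun h => ⟨hne y h.1, h.2⟩, fun h => ⟨?_, h.2⟩⟩
  obtain ⟨t, ht, rfl⟩ := (exists_pos_eq_add_smul_iff_inv_norm_smul (hunit w hw.1) y).2 h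
  rw [add_sub_cancel_left, real_inner_smul_left]
  exact mul_pos ht hw.2

end InnerProductSpace

section Euclidean

variable {d : ℕ} {S : Finset (EuclideanSpace ℝ (Fin d))} {a b x : EuclideanSpace ℝ (Fin d)}

lemma claims_le_halfSpaceCount : claims S b a ≤ halfSpaceCount S a (b - a) := by
  refine card_le_card fun y hy => ?_
  rw [mem_filter, ← sq_lt_sq₀ dist_nonneg dist_nonneg, dist_sq_eq_dist_sq_add a b y] at hy
  exact mem_filter.2 ⟨hy.1, by nlinarith [sq_nonneg ‖b - a‖]⟩

lemma card_sub_halfSpaceCount_le_claims (hab : a ≠ b) :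
    #S - halfSpaceCount S a (b - a) ≤ claims S a b := by
  have hba : 0 < ‖b - a‖ := norm_pos_iff.2 (sub_ne_zero.2 hab.symm)
  have hsplit := card_filter_add_card_filter_not (s := S) fun y => 0 < ⟪y - a, b - a⟫
  have hle : #{y ∈ S | ¬0 < ⟪y - a, b - a⟫} ≤ claims S a b := by
    refine card_le_card fun y hy => ?_
    rw [mem_filter, not_lt] at hy
    rw [mem_filter, ← sq_lt_sq₀ dist_nonneg dist_nonneg, dist_sq_eq_dist_sq_add a b y]
    exact ⟨hy.1, by nlinarith⟩
  rw [halfSpaceCount]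
  omega

lemma claims_add_claims_le : claims S a b + claims S b a ≤ #S := by
  rw [claims, claims, ← card_union_of_disjoint (disjoint_filter.2 fun _ _ h h' => h.asymm h')]
  exact card_le_card (union_subset (filter_subset _ _) (filter_subset _ _))

lemma exists_halfSpaceCount_le_claims (S : Finset (EuclideanSpace ℝ (Fin d))) (a u) :
    ∃ b, halfSpaceCount S a u ≤ claims S b a := by
  obtain ⟨s, hs, hsmall⟩ := exists_pos_forall_mul_lt {y ∈ S | 0 < ⟪y - a, u⟫}
    (fun _ => ‖u‖ ^ 2) (fun y => 2 * ⟪y - a, u⟫) fun y hy => by linarith [(mem_filter.1 hy).2]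
  refine ⟨a + s • u, card_le_card fun y hy => ?_⟩
  have hy' := hsmall y hy
  rw [mem_filter] at hy ⊢
  rw [← sq_lt_sq₀ dist_nonneg dist_nonneg, dist_sq_eq_dist_sq_add a, add_sub_cancel_left,
    norm_smul, real_inner_smul_right, mul_pow, Real.norm_eq_abs, sq_abs]
  exact ⟨hy.1, by nlinarith⟩

theorem isWinningPoint_iff : IsWinningPoint S a ↔ ∀ u, 2 * halfSpaceCount S a u ≤ #S := by
  constructor
  · intro h u
    obtain ⟨b, hb⟩ := exists_halfSpaceCount_le_claims S a u
    have := h b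
    have := claims_add_claims_le (S := S) (a := a) (b := b)
    omega
  · intro h b
    rcases eq_or_ne a b with rfl | hab
    · exact le_rfl
    have := h (b - a)
    have := claims_le_halfSpaceCount (S := S) (a := a) (b := b)
    have := card_sub_halfSpaceCount_le_claims (S := S) hab
    omega

lemma IsWinningPoint.card_hyperplane_pos (h : IsWinningPoint S a) (hodd : Odd #S) (u) :
    0 < #{y ∈ S | ⟪y - a, u⟫ = 0} := by
  have := halfSpaceCount_add_halfSpaceCount_neg_add_card S a u
  have := isWinningPoint_iff.1 h u
  have := isWinningPoint_iff.1 h (-u)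
  obtain ⟨k, hk⟩ := hodd
  omega

lemma IsWinningPoint.two_mul_halfSpaceCount_add_one (h : IsWinningPoint S a) (hodd : Odd #S)
    {u} (hu : #{y ∈ S | ⟪y - a, u⟫ = 0} ≤ 1) : 2 * halfSpaceCount S a u + 1 = #S := by
  have := halfSpaceCount_add_halfSpaceCount_neg_add_card S a u
  have := isWinningPoint_iff.1 h u
  have := isWinningPoint_iff.1 h (-u)
  obtain ⟨k, hk⟩ := hodd
  omega

lemma IsWinningPoint.mem (h : IsWinningPoint S a) (hodd : Odd #S) : a ∈ S := by
  by_contra ha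
  obtain ⟨u, -, hu⟩ := exists_mem_orthogonal_forall_inner_ne_zero ⊥ (S.image (· - a)) <| by
    simp only [mem_image, Submodule.mem_bot, forall_exists_index, and_imp]
    rintro _ y hy rfl hya
    exact ha (sub_eq_zero.1 hya ▸ hy)
  obtain ⟨y, hy, hy0⟩ := filter_nonempty_iff.1 (card_pos.1 (h.card_hyperplane_pos hodd u))
  exact hu _ (mem_image_of_mem _ hy) hy0

open scoped Classical in
lemma IsWinningPoint.rayCount_eq (h : IsWinningPoint S a) (hodd : Odd #S) {v} (hv : v ≠ 0) :
    rayCount S a v = rayCount S a (-v) := by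
  obtain ⟨w, hw, hline⟩ := exists_mem_orthogonal_forall_inner_ne_zero (ℝ ∙ v)
    ({y ∈ S | y - a ∉ ℝ ∙ v}.image (· - a)) <| by
      simp only [mem_image, mem_filter, forall_exists_index, and_imp]
      rintro _ y - hy rfl
      exact hy
  replace hline (y) (hy : y ∈ S) (h0 : ⟪y - a, w⟫ = 0) : y - a ∈ ℝ ∙ v := by
    by_contra hn
    exact hline _ (mem_image_of_mem _ (mem_filter.2 ⟨hy, hn⟩)) h0
  obtain ⟨ε, hε, hsep⟩ := exists_pos_forall_mul_lt {y ∈ S | ⟪y - a, w⟫ ≠ 0}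
    (fun y => |⟪y - a, v⟫|) (fun y => |⟪y - a, w⟫|) fun y hy => abs_pos.2 (mem_filter.1 hy).2
  replace hsep (y) (hy : y ∈ S) (h0 : ⟪y - a, w⟫ ≠ 0) := hsep y (mem_filter.2 ⟨hy, h0⟩)
  have key (v') (hv' : v' ≠ 0) (hspan : ℝ ∙ v' = ℝ ∙ v)
      (habs : ∀ y, |⟪y - a, v'⟫| = |⟪y - a, v⟫|) :
      2 * (halfSpaceCount S a w + rayCount S a v') + 1 = #S := by
    rw [← hspan] at hw hline
    simp only [← habs] at hsep
    rw [rayCount, ← halfSpaceCount_add_smul hv' hw hline hε hsep]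
    exact h.two_mul_halfSpaceCount_add_one hodd
      (card_filter_inner_add_smul_eq_zero_le_one hline hε hsep)
  have hpos := key v hv rfl fun _ => rfl
  have hneg := key (-v) (neg_ne_zero.2 hv) (by simpa using Submodule.span_neg (R := ℝ) {v})
    fun _ => by rw [inner_neg_right, abs_neg]
  omega

lemma halfSpaceCount_neg_of_forall_rayCount_eq
    (h : ∀ v, v ≠ 0 → rayCount S x v = rayCount S x (-v)) (u) :
    halfSpaceCount S x (-u) = halfSpaceCount S x u := by
  -- Summing over `A ∪ -A`, which is closed under negation, lets `w ↦ -w` reindex the sums.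
  set A := (S.erase x).image fun y => ‖y - x‖⁻¹ • (y - x)
  have hD (y) (hy : y ∈ S) (hyx : y ≠ x) : ‖y - x‖⁻¹ • (y - x) ∈ A ∪ -A :=
    mem_union_left _ (mem_image_of_mem _ (mem_erase.2 ⟨hyx, hy⟩))
  have hA (w) (hw : w ∈ A) : ‖w‖ = 1 := by
    obtain ⟨y, hy, rfl⟩ := mem_image.1 hw
    exact norm_smul_inv_norm (sub_ne_zero.2 (mem_erase.1 hy).1)
  have hunit (w) (hw : w ∈ A ∪ -A) : ‖w‖ = 1 := by
    rcases mem_union.1 hw with hw | hw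
    · exact hA w hw
    · simpa using hA _ (Finset.mem_neg'.1 hw)
  have hneg (w) (hw : w ∈ A ∪ -A) : -w ∈ A ∪ -A := by
    simpa [or_comm] using hw
  rw [halfSpaceCount_eq_sum_card_ray S x (-u) hD hunit,
    halfSpaceCount_eq_sum_card_ray S x u hD hunit]
  refine sum_nbij' Neg.neg Neg.neg (fun w hw => ?_) (fun w hw => ?_) (fun w _ => neg_neg w)
    (fun w _ => neg_neg w) fun w hw => h w ?_
  · simp only [mem_filter, inner_neg_right, inner_neg_left] at hw ⊢
    exact ⟨hneg w hw.1, hw.2⟩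
  · simp only [mem_filter, inner_neg_right, inner_neg_left] at hw ⊢
    exact ⟨hneg w hw.1, by linarith [hw.2]⟩
  · rintro rfl
    simpa using hunit 0 (mem_filter.1 hw).1

lemma isWinningPoint_of_forall_rayCount_eq
    (h : ∀ v, v ≠ 0 → rayCount S x v = rayCount S x (-v)) : IsWinningPoint S x :=
  isWinningPoint_iff.2 fun u => by
    have := halfSpaceCount_add_halfSpaceCount_neg_add_card S x u
    have := halfSpaceCount_neg_of_forall_rayCount_eq h u
    omega

end Euclidean

theorem stmt6_general (d : ℕ) (S : Finset (EuclideanSpace ℝ (Fin d)))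
    (hodd : Odd S.card) :
    ((∃ a, IsWinningPoint S a) ↔
      ∃ x ∈ S, ∀ v : EuclideanSpace ℝ (Fin d), v ≠ 0 →
        rayCount S x v = rayCount S x (-v)) ∧
    (∀ x ∈ S,
      (∀ v : EuclideanSpace ℝ (Fin d), v ≠ 0 →
        rayCount S x v = rayCount S x (-v)) →
      IsWinningPoint S x) :=
  ⟨⟨fun ⟨a, ha⟩ => ⟨a, ha.mem hodd, fun _ hv => ha.rayCount_eq hodd hv⟩,
    fun ⟨x, _, hx⟩ => ⟨x, isWinningPoint_of_forall_rayCount_eq hx⟩⟩,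
    fun _ _ hx => isWinningPoint_of_forall_rayCount_eq hx⟩

/-- for `d ≥ 2` and `|S|` odd, Alice wins iff there is `x ∈ S` such that every
line through `x` is even-balanced about `x` (the two open half-lines contain equally many
points of `S`); moreover any such `x` is a winning point. -/
theorem stmt6 (d : ℕ) (hd : 2 ≤ d) (S : Finset (EuclideanSpace ℝ (Fin d)))
    (hodd : Odd S.card) :
    ((∃ a, IsWinningPoint S a) ↔
      ∃ x ∈ S, ∀ v : EuclideanSpace ℝ (Fin d), v ≠ 0 →
        rayCount S x v = rayCount S x (-v)) ∧
    (∀ x ∈ S,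
      (∀ v : EuclideanSpace ℝ (Fin d), v ≠ 0 →
        rayCount S x v = rayCount S x (-v)) →
      IsWinningPoint S x) :=
  stmt6_general d S hodd
end

section
/- Let S be a finite set of points in ℝ² with |S| odd. Then the set of slopes m ∈ ℝ for which there is no c ∈ ℝ making the line {(x,y) ∈ ℝ² : y = mx + c} perfect is finite; in other words, a perfect line exists in all but finitely many directions. -/
/-! If `m` is not the slope of a segment joining two points of `S`, the intercepts
`p 1 - m * p 0` of the points of `S` are pairwise distinct, and the line of slope `m` whose
intercept is their median is perfect. So only the finitely many slopes of such segments can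
fail. -/

/-- The line `{(x,y) ∈ ℝ² : y = m*x + c}` is perfect for an odd-sized `S`:
its two open sides contain equally many points of `S`, and it contains exactly one
point of `S`. -/
noncomputable def IsPerfectSlopeLine (S : Finset (EuclideanSpace ℝ (Fin 2)))
    (m c : ℝ) : Prop :=
  (S.filter fun p => m * p 0 + c < p 1).card = (S.filter fun p => p 1 < m * p 0 + c).card ∧
  (S.filter fun p => p 1 = m * p 0 + c).card = 1

open Finset

namespace Finset

theorem card_filter_comp_of_injOn {α β : Type*} [DecidableEq α] {s : Finset β} {f : β → α}
    (hf : Set.InjOn f s) (p : α → Prop) [DecidablePred p] :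
    #(s.filter fun x => p (f x)) = #((s.image f).filter p) := by
  rw [filter_image, card_image_of_injOn (hf.mono (filter_subset _ _))]

variable {α β : Type*} [LinearOrder α]

theorem card_filter_lt_orderEmbOfFin (s : Finset α) {n : ℕ} (h : #s = n) (i : Fin n) :
    #(s.filter (· < s.orderEmbOfFin h i)) = i := by
  have hs := image_orderEmbOfFin_univ s h
  generalize s.orderEmbOfFin h = e at hs ⊢
  rw [← hs, filter_image, card_image_of_injective _ e.injective, ← Fin.card_Iio]
  congr 1
  ext
  simp

theorem card_filter_gt_orderEmbOfFin (s : Finset α) {n : ℕ} (h : #s = n) (i : Fin n) :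
    #(s.filter (s.orderEmbOfFin h i < ·)) = n - 1 - i := by
  have hs := image_orderEmbOfFin_univ s h
  generalize s.orderEmbOfFin h = e at hs ⊢
  rw [← hs, filter_image, card_image_of_injective _ e.injective, ← Fin.card_Ioi]
  congr 1
  ext
  simp

theorem exists_median (s : Finset α) {k : ℕ} (h : #s = 2 * k + 1) :
    ∃ t ∈ s, #(s.filter (· < t)) = k ∧ #(s.filter (t < ·)) = k :=
  ⟨s.orderEmbOfFin h ⟨k, by omega⟩, orderEmbOfFin_mem _ _ _,
    card_filter_lt_orderEmbOfFin s h _, by rw [card_filter_gt_orderEmbOfFin, Fin.val_mk]; omega⟩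

theorem exists_balanced_level_of_injOn {s : Finset β} {f : β → α} (hf : Set.InjOn f s)
    (hs : Odd #s) :
    ∃ t, #(s.filter (t < f ·)) = #(s.filter (f · < t)) ∧ #(s.filter (f · = t)) = 1 := by
  obtain ⟨k, hk⟩ := hs
  obtain ⟨t, ht, hlt, hgt⟩ := exists_median (s.image f) (k := k) (by rw [card_image_of_injOn hf, hk])
  refine ⟨t, ?_, ?_⟩
  · rw [card_filter_comp_of_injOn hf (t < ·), card_filter_comp_of_injOn hf (· < t), hlt, hgt]
  · rw [card_filter_comp_of_injOn hf (· = t), filter_eq', if_pos ht, card_singleton]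

end Finset

def intercept (m : ℝ) (p : EuclideanSpace ℝ (Fin 2)) : ℝ := p 1 - m * p 0

noncomputable def segmentSlopes (S : Finset (EuclideanSpace ℝ (Fin 2))) : Finset ℝ :=
  (S ×ˢ S).image fun pq => (pq.1 1 - pq.2 1) / (pq.1 0 - pq.2 0)

theorem injOn_intercept_of_notMem_segmentSlopes {S : Finset (EuclideanSpace ℝ (Fin 2))} {m : ℝ}
    (hm : m ∉ segmentSlopes S) : Set.InjOn (intercept m) S := by
  intro p hp q hq hpq
  have hdy : p 1 - q 1 = m * (p 0 - q 0) := by unfold intercept at hpq; linarith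
  have hdx : p 0 = q 0 := by
    by_contra hdx
    refine hm (mem_image.mpr ⟨(p, q), mem_product.mpr ⟨hp, hq⟩, ?_⟩)
    rw [hdy, mul_div_cancel_right₀ _ (sub_ne_zero.mpr hdx)]
  ext i
  fin_cases i
  · exact hdx
  · simpa [hdx, sub_eq_zero] using hdy

theorem isPerfectSlopeLine_iff (S : Finset (EuclideanSpace ℝ (Fin 2))) (m c : ℝ) :
    IsPerfectSlopeLine S m c ↔ #(S.filter (c < intercept m ·)) = #(S.filter (intercept m · < c))
      ∧ #(S.filter (intercept m · = c)) = 1 := by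
  have above : ∀ p : EuclideanSpace ℝ (Fin 2), m * p 0 + c < p 1 ↔ c < intercept m p := by
    intro p; unfold intercept; constructor <;> intro <;> linarith
  have below : ∀ p : EuclideanSpace ℝ (Fin 2), p 1 < m * p 0 + c ↔ intercept m p < c := by
    intro p; unfold intercept; constructor <;> intro <;> linarith
  have on : ∀ p : EuclideanSpace ℝ (Fin 2), p 1 = m * p 0 + c ↔ intercept m p = c := by
    intro p; unfold intercept; constructor <;> intro <;> linarith
  simp only [IsPerfectSlopeLine, above, below, on]

/-- for `S ⊆ ℝ²` with `|S|` odd, the set of slopes `m` admitting no perfect line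
`y = m*x + c` is finite. -/
theorem stmt8 (S : Finset (EuclideanSpace ℝ (Fin 2))) (hodd : Odd S.card) :
    {m : ℝ | ¬ ∃ c : ℝ, IsPerfectSlopeLine S m c}.Finite := by
  refine (segmentSlopes S).finite_toSet.subset fun m hm => ?_
  by_contra hslope
  simp_rw [Set.mem_ofPred_eq, isPerfectSlopeLine_iff] at hm
  exact hm (exists_balanced_level_of_injOn (injOn_intercept_of_notMem_segmentSlopes hslope) hodd)
end

section
/- Let S be a set of 2n distinct points in ℝ² (n ≥ 1). Then for every point x ∈ S there exists a perfect line through x, i.e. a line l with x ∈ l such that each of the two open half-planes determined by l contains fewer than n points of S. -/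
/-!
Fix `x ∈ S` and, for a direction `c`, count the points of `S` strictly on the positive side of
the line through `x` orthogonal to `c`. The directions `c` whose positive side holds at least half
of `S` form an open set `U`, and so does `-U`. If no line through `x` were perfect, `U` and `-U`
would cover the connected set of nonzero directions; both are nonempty, so they would meet in
some `c`, and then the two open sides of the line through `x` orthogonal to `c` would together
hold all of `S`, which is impossible since neither contains `x`.
-/

open scoped RealInnerProductSpace
open Finset

section HalfSpaces

variable {E : Type*} [NormedAddCommGroup E] [InnerProductSpace ℝ E]

noncomputable def strictlyAbove (S : Finset E) (x c : E) : Finset E :=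
  S.filter fun y => ⟪x, c⟫ < ⟪y, c⟫

lemma strictlyAbove_neg (S : Finset E) (x c : E) :
    strictlyAbove S x (-c) = S.filter fun y => ⟪y, c⟫ < ⟪x, c⟫ := by
  simp only [strictlyAbove, inner_neg_right, neg_lt_neg_iff]

lemma card_strictlyAbove_add_card_strictlyAbove_neg_lt {S : Finset E} {x : E} (hx : x ∈ S)
    (c : E) : #(strictlyAbove S x c) + #(strictlyAbove S x (-c)) < #S := by
  classical
  rw [strictlyAbove_neg, strictlyAbove,
    ← card_union_of_disjoint (disjoint_filter.2 fun _ _ h => h.asymm)]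
  refine card_lt_card ⟨union_subset (filter_subset _ _) (filter_subset _ _), fun h => ?_⟩
  rcases mem_union.1 (h hx) with h | h <;> exact lt_irrefl _ (mem_filter.1 h).2

lemma isOpen_setOf_le_card_strictlyAbove (S : Finset E) (x : E) (k : ℕ) :
    IsOpen {c | k ≤ #(strictlyAbove S x c)} := by
  refine isOpen_iff_mem_nhds.2 fun c hc => ?_
  have hstable : ∀ᶠ c' in nhds c, ∀ y ∈ strictlyAbove S x c, ⟪x, c'⟫ < ⟪y, c'⟫ :=
    (Filter.eventually_all_finset _).2 fun y hy =>
      (isOpen_lt (f := fun c' => ⟪x, c'⟫) (g := fun c' => ⟪y, c'⟫) (by fun_prop)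
        (by fun_prop)).eventually_mem (mem_filter.1 hy).2
  filter_upwards [hstable] with c' hc'
  exact hc.trans (card_le_card fun y hy => mem_filter.2 ⟨(mem_filter.1 hy).1, hc' y hy⟩)

theorem exists_ne_zero_two_mul_card_strictlyAbove_lt (hE : 1 < Module.rank ℝ E)
    {S : Finset E} {x : E} (hx : x ∈ S) :
    ∃ c : E, c ≠ 0 ∧
      2 * #(strictlyAbove S x c) < #S ∧ 2 * #(strictlyAbove S x (-c)) < #S := by
  by_contra! hcover
  set U : Set E := {c | #S ≤ 2 * #(strictlyAbove S x c)}
  have hU : IsOpen U := by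
    convert isOpen_setOf_le_card_strictlyAbove S x ((#S + 1) / 2) using 1
    exact Set.ext fun c =>
      show #S ≤ 2 * #(strictlyAbove S x c) ↔ (#S + 1) / 2 ≤ #(strictlyAbove S x c) by omega
  have hmem : ∀ c : E, c ≠ 0 → c ∈ U ∨ -c ∈ U := fun c hc => by
    by_cases h : 2 * #(strictlyAbove S x c) < #S
    · exact .inr (hcover c hc h)
    · exact .inl (not_lt.1 h)
  have hnonempty : ({0}ᶜ ∩ U).Nonempty ∧ ({0}ᶜ ∩ Neg.neg ⁻¹' U).Nonempty := by
    have : Nontrivial E := rank_pos_iff_nontrivial.1 (zero_lt_one.trans hE)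
    obtain ⟨c, hc⟩ := exists_ne (0 : E)
    rcases hmem c hc with h | h
    · exact ⟨⟨c, hc, h⟩, -c, neg_ne_zero.2 hc, by simpa using h⟩
    · exact ⟨⟨-c, neg_ne_zero.2 hc, h⟩, c, hc, h⟩
  obtain ⟨c, -, hcU, hcU'⟩ := (isConnected_compl_singleton_of_one_lt_rank hE 0).isPreconnected
    U (Neg.neg ⁻¹' U) hU (hU.preimage continuous_neg) hmem hnonempty.1 hnonempty.2
  have := card_strictlyAbove_add_card_strictlyAbove_neg_lt hx c
  simp only [U, Set.mem_preimage, Set.mem_ofPred_eq] at hcU hcU'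
  omega

end HalfSpaces

theorem stmt9_general (n : ℕ) (S : Finset (EuclideanSpace ℝ (Fin 2)))
    (hcard : S.card = 2 * n) (x : EuclideanSpace ℝ (Fin 2)) (hx : x ∈ S) :
    ∃ (c : EuclideanSpace ℝ (Fin 2)) (lam : ℝ), c ≠ 0 ∧ ⟪x, c⟫ = lam ∧
      (S.filter fun y => lam < ⟪y, c⟫).card < n ∧
      (S.filter fun y => ⟪y, c⟫ < lam).card < n := by
  have hrank : 1 < Module.rank ℝ (EuclideanSpace ℝ (Fin 2)) := by
    rw [← Module.finrank_eq_rank, finrank_euclideanSpace_fin]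
    norm_num
  obtain ⟨c, hc, hpos, hneg⟩ := exists_ne_zero_two_mul_card_strictlyAbove_lt hrank hx
  rw [strictlyAbove_neg] at hneg
  exact ⟨c, _, hc, rfl, by unfold strictlyAbove at hpos; omega, by omega⟩

/-- for a set `S` of `2n` distinct points in `ℝ²` (`n ≥ 1`) and any `x ∈ S`, there
is a perfect line through `x`: a line `{y | ⟪y,c⟫ = lam}` containing `x`, each of whose two
open half-planes contains fewer than `n` points of `S`. -/
theorem stmt9 (n : ℕ) (hn : 1 ≤ n) (S : Finset (EuclideanSpace ℝ (Fin 2)))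
    (hcard : S.card = 2 * n) (x : EuclideanSpace ℝ (Fin 2)) (hx : x ∈ S) :
    ∃ (c : EuclideanSpace ℝ (Fin 2)) (lam : ℝ), c ≠ 0 ∧ ⟪x, c⟫ = lam ∧
      (S.filter fun y => lam < ⟪y, c⟫).card < n ∧
      (S.filter fun y => ⟪y, c⟫ < lam).card < n :=
  stmt9_general n S hcard x hx
end

section
/- Let S be a set of 2n distinct points in ℝ² (n ≥ 1). Suppose there is a point x ∈ ℝ² with x ∉ S such that every perfect line contains x and every perfect line is even-balanced about x. Then x is a winning point for Alice; in particular, Alice wins. -/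
/-!
For `b ≠ x`, every voter preferring `b` lies in the open half-plane `{y | 0 < ⟪y - x, b - x⟫}`,
so `x` wins as soon as each open half-plane bounded by a line through `x` holds at most half of `S`.

Through every voter `u` there is a perfect line: among the normal directions `c ≠ 0`, those for which
one open side of the line through `u` holds at least half of `S` form two disjoint open sets, swapped
by `c ↦ -c`, and these cannot cover the connected set `ℝ² ∖ {0}`. By hypothesis that line is the line
`xu`, so the two open rays from `x` along it carry equally many voters. Grouping the voters of an
open half-plane through `x` by the ray from `x` they lie on, and matching each ray with the opposite
one, shows that the half-plane holds no more voters than the opposite half-plane.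
-/

open scoped RealInnerProductSpace

/-- The line `{y | ⟪y,c⟫ = lam}` is perfect (even case): each open side contains fewer than
`|S|/2` points of `S`. -/
noncomputable def IsPerfectEven {d : ℕ} (S : Finset (EuclideanSpace ℝ (Fin d)))
    (c : EuclideanSpace ℝ (Fin d)) (lam : ℝ) : Prop :=
  2 * (S.filter fun y => lam < ⟪y, c⟫).card < S.card ∧
  2 * (S.filter fun y => ⟪y, c⟫ < lam).card < S.card

open Finset Module

theorem Finset.card_filter_lt_add_card_filter_gt {α β : Type*} [LinearOrder β] (S : Finset α)
    (f g : α → β) :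
    #{a ∈ S | f a < g a} + #{a ∈ S | g a < f a} = #{a ∈ S | f a ≠ g a} := by
  classical
  rw [← card_union_of_disjoint (disjoint_filter.2 fun a _ h => h.not_gt), ← filter_or]
  simp only [ne_iff_lt_or_gt]

theorem isOpen_setOf_le_card_filter {α X : Type*} [TopologicalSpace X] (S : Finset α)
    (p : α → X → Prop) [∀ a x, Decidable (p a x)] (hp : ∀ a ∈ S, IsOpen {x | p a x}) (k : ℕ) :
    IsOpen {x | k ≤ #{a ∈ S | p a x}} := by
  refine isOpen_iff_forall_mem_open.2 fun x₀ hx₀ => ?_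
  refine ⟨⋂ a ∈ S.filter (p · x₀), {x | p a x}, fun x hx => ?_,
    isOpen_biInter_finset fun a ha => hp a (mem_filter.1 ha).1, by simp⟩
  refine le_trans hx₀ (card_le_card fun a ha => ?_)
  simp only [Set.mem_iInter] at hx
  exact mem_filter.2 ⟨(mem_filter.1 ha).1, hx a ha⟩

section EuclideanSpace

variable {d : ℕ}

theorem exists_isPerfectEven_through_mem (hd : 1 < d) {S : Finset (EuclideanSpace ℝ (Fin d))}
    {q : EuclideanSpace ℝ (Fin d)} (hq : q ∈ S) : ∃ c ≠ 0, IsPerfectEven S c ⟪q, c⟫ := by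
  -- `k = ⌈#S / 2⌉`, so that `k ≤ m ↔ #S ≤ 2 * m`
  set k := #S - #S / 2
  set U := {c : EuclideanSpace ℝ (Fin d) | k ≤ #{y ∈ S | ⟪q, c⟫ < ⟪y, c⟫}}
  set D := {c : EuclideanSpace ℝ (Fin d) | k ≤ #{y ∈ S | ⟪y, c⟫ < ⟪q, c⟫}}
  have hU : IsOpen U := isOpen_setOf_le_card_filter S _
    (fun y _ => isOpen_lt (by fun_prop) (by fun_prop)) k
  have hD : IsOpen D := isOpen_setOf_le_card_filter S _
    (fun y _ => isOpen_lt (by fun_prop) (by fun_prop)) k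
  have hUD : ∀ c, c ∈ U → c ∈ D → False := by
    intro c hcU hcD
    have hlt : #{y ∈ S | ⟪q, c⟫ ≠ ⟪y, c⟫} < #S := card_lt_card (filter_ssubset.2 ⟨q, hq, by simp⟩)
    have := card_filter_lt_add_card_filter_gt S (fun _ => ⟪q, c⟫) (fun y => ⟪y, c⟫)
    simp only [U, D, Set.mem_ofPred_eq] at hcU hcD
    omega
  have hneg : ∀ c, c ∈ U ↔ -c ∈ D := by
    intro c
    simp only [U, D, Set.mem_ofPred_eq, inner_neg_right, neg_lt_neg_iff]
  by_contra! hperf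
  have hcover : {(0 : EuclideanSpace ℝ (Fin d))}ᶜ ⊆ U ∪ D := by
    intro c hc
    have := hperf c hc
    simp only [IsPerfectEven, not_and_or, not_lt] at this
    simp only [U, D, Set.mem_union, Set.mem_ofPred_eq]
    omega
  have hrank : 1 < Module.rank ℝ (EuclideanSpace ℝ (Fin d)) := by
    rw [← finrank_eq_rank, finrank_euclideanSpace_fin]
    exact_mod_cast hd
  have : Nontrivial (EuclideanSpace ℝ (Fin d)) :=
    nontrivial_of_finrank_pos (by rw [finrank_euclideanSpace_fin]; omega)
  obtain ⟨c₁, hc₁⟩ := exists_ne (0 : EuclideanSpace ℝ (Fin d))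
  obtain ⟨cU, hcU, cD, hcD⟩ : ∃ cU ∈ ({0}ᶜ ∩ U), ∃ cD, cD ∈ ({0}ᶜ ∩ D) := by
    rcases hcover hc₁ with h | h
    · exact ⟨c₁, ⟨hc₁, h⟩, -c₁, ⟨neg_ne_zero.2 hc₁, (hneg c₁).1 h⟩⟩
    · exact ⟨-c₁, ⟨neg_ne_zero.2 hc₁, (hneg _).2 (by rwa [neg_neg])⟩, c₁, ⟨hc₁, h⟩⟩
  obtain ⟨c, -, hcU, hcD⟩ := (isConnected_compl_singleton_of_one_lt_rank hrank 0).isPreconnected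
    U D hU hD hcover ⟨cU, hcU⟩ ⟨cD, hcD⟩
  exact hUD c hcU hcD

theorem rayCount_smul_of_pos (S : Finset (EuclideanSpace ℝ (Fin d)))
    (x v : EuclideanSpace ℝ (Fin d)) {a : ℝ} (ha : 0 < a) :
    rayCount S x (a • v) = rayCount S x v := by
  classical
  unfold rayCount
  congr 1
  refine filter_congr fun y _ => ⟨fun ⟨t, ht, hy⟩ => ⟨t * a, by positivity, by rw [hy, mul_smul]⟩,
    fun ⟨t, ht, hy⟩ => ⟨t / a, by positivity, by rw [hy, smul_smul, div_mul_cancel₀ t ha.ne']⟩⟩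

theorem eq_add_smul_iff_of_inner_eq_one {x c v y : EuclideanSpace ℝ (Fin d)} (hv : ⟪v, c⟫ = 1)
    {t : ℝ} (ht : t ≠ 0) :
    y = x + t • v ↔ ⟪y - x, c⟫ = t ∧ ⟪y - x, c⟫⁻¹ • (y - x) = v := by
  constructor
  · rintro rfl
    simp only [add_sub_cancel_left, real_inner_smul_left, hv, mul_one, smul_smul,
      inv_mul_cancel₀ ht, one_smul, and_self]
  · rintro ⟨hyt, hyv⟩
    rw [← hyv, hyt, smul_smul, mul_inv_cancel₀ ht, one_smul, add_sub_cancel]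

theorem rayCount_eq_card_filter {S : Finset (EuclideanSpace ℝ (Fin d))}
    {x c v : EuclideanSpace ℝ (Fin d)} (hv : ⟪v, c⟫ = 1) :
    rayCount S x v = #{y ∈ S | 0 < ⟪y - x, c⟫ ∧ ⟪y - x, c⟫⁻¹ • (y - x) = v} := by
  classical
  unfold rayCount
  congr 1
  refine filter_congr fun y _ => ⟨fun ⟨t, ht, hy⟩ => ?_, fun ⟨hpos, hy⟩ => ?_⟩
  · obtain ⟨hyt, hyv⟩ := (eq_add_smul_iff_of_inner_eq_one hv ht.ne').1 hy
    exact ⟨hyt ▸ ht, hyv⟩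
  · exact ⟨_, hpos, (eq_add_smul_iff_of_inner_eq_one hv hpos.ne').2 ⟨rfl, hy⟩⟩

theorem rayCount_neg_eq_card_filter {S : Finset (EuclideanSpace ℝ (Fin d))}
    {x c v : EuclideanSpace ℝ (Fin d)} (hv : ⟪v, c⟫ = 1) :
    rayCount S x (-v) = #{y ∈ S | ⟪y - x, c⟫ < 0 ∧ ⟪y - x, c⟫⁻¹ • (y - x) = v} := by
  classical
  unfold rayCount
  congr 1
  refine filter_congr fun y _ => ⟨fun ⟨t, ht, hy⟩ => ?_, fun ⟨hneg, hy⟩ => ?_⟩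
  · rw [smul_neg, ← neg_smul] at hy
    obtain ⟨hyt, hyv⟩ := (eq_add_smul_iff_of_inner_eq_one hv (neg_ne_zero.2 ht.ne')).1 hy
    exact ⟨by linarith, hyv⟩
  · refine ⟨-⟪y - x, c⟫, neg_pos.2 hneg, ?_⟩
    rw [smul_neg, ← neg_smul, neg_neg]
    exact (eq_add_smul_iff_of_inner_eq_one hv hneg.ne).2 ⟨rfl, hy⟩

theorem card_filter_inner_pos_le_of_rayCount_eq {S : Finset (EuclideanSpace ℝ (Fin d))}
    {x c : EuclideanSpace ℝ (Fin d)}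
    (hbal : ∀ u ∈ S, 0 < ⟪u - x, c⟫ → rayCount S x (u - x) = rayCount S x (-(u - x))) :
    #{y ∈ S | 0 < ⟪y - x, c⟫} ≤ #{y ∈ S | ⟪y - x, c⟫ < 0} := by
  classical
  -- `r y` is the direction of the line `xy`, normalized by `⟪r y, c⟫ = 1`
  set r : EuclideanSpace ℝ (Fin d) → EuclideanSpace ℝ (Fin d) := fun y => ⟪y - x, c⟫⁻¹ • (y - x)
  set U := {y ∈ S | 0 < ⟪y - x, c⟫}
  set D := {y ∈ S | ⟪y - x, c⟫ < 0}
  have hr : ∀ u ∈ U, ⟪r u, c⟫ = 1 := fun u hu => by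
    simp only [r, real_inner_smul_left, inv_mul_cancel₀ (mem_filter.1 hu).2.ne']
  have hfiber : ∀ v ∈ U.image r, #{y ∈ U | r y = v} = #{y ∈ D | r y = v} := by
    simp only [mem_image, forall_exists_index, and_imp]
    rintro _ u hu rfl
    have hu' := mem_filter.1 hu
    have hscale : r u = ⟪u - x, c⟫⁻¹ • (u - x) := rfl
    rw [filter_filter, filter_filter, ← rayCount_eq_card_filter (hr u hu),
      ← rayCount_neg_eq_card_filter (hr u hu), hscale, ← smul_neg,
      rayCount_smul_of_pos _ _ _ (inv_pos.2 hu'.2), rayCount_smul_of_pos _ _ _ (inv_pos.2 hu'.2)]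
    exact hbal u hu'.1 hu'.2
  calc #U = #{y ∈ U | r y ∈ U.image r} := by
        rw [filter_true_of_mem fun y hy => mem_image_of_mem r hy]
    _ = ∑ v ∈ U.image r, #{y ∈ U | r y = v} := (sum_card_fiberwise_eq_card_filter _ _ _).symm
    _ = ∑ v ∈ U.image r, #{y ∈ D | r y = v} := sum_congr rfl hfiber
    _ = #{y ∈ D | r y ∈ U.image r} := sum_card_fiberwise_eq_card_filter _ _ _
    _ ≤ #D := card_filter_le _ _

theorem isWinningPoint_of_forall_two_mul_card_le {S : Finset (EuclideanSpace ℝ (Fin d))}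
    {x : EuclideanSpace ℝ (Fin d)} (h : ∀ c, 2 * #{y ∈ S | 0 < ⟪y - x, c⟫} ≤ #S) :
    IsWinningPoint S x := by
  intro b
  by_cases hb : b = x
  · rw [hb]
  have hdist : ∀ y, dist b y ^ 2 = dist x y ^ 2 - 2 * ⟪y - x, b - x⟫ + ‖b - x‖ ^ 2 := fun y => by
    rw [dist_comm x, dist_eq_norm, dist_eq_norm, ← norm_sub_sq_real, sub_sub_sub_cancel_right,
      norm_sub_rev]
  have hc : 0 < ‖b - x‖ ^ 2 := by have := norm_pos_iff.2 (sub_ne_zero.2 hb); positivity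
  have hcloser : claims S b x ≤ #{y ∈ S | 0 < ⟪y - x, b - x⟫} := by
    refine card_le_card (monotone_filter_right _ fun y _ hy => ?_)
    have := hdist y
    nlinarith [dist_nonneg (x := b) (y := y)]
  have hfarther : #{y ∈ S | ¬ 0 < ⟪y - x, b - x⟫} ≤ claims S x b := by
    refine card_le_card (monotone_filter_right _ fun y _ hy => ?_)
    have := hdist y
    nlinarith [dist_nonneg (x := x) (y := y), dist_nonneg (x := b) (y := y)]
  have := card_filter_add_card_filter_not (s := S) (p := fun y => 0 < ⟪y - x, b - x⟫)
  have := h (b - x)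
  unfold claims at *
  omega

end EuclideanSpace

theorem setOf_inner_eq_eq_setOf_add_smul {E : Type*} [NormedAddCommGroup E]
    [InnerProductSpace ℝ E] [Fact (finrank ℝ E = 2)] {x u c : E} (hc : c ≠ 0) (hux : u - x ≠ 0)
    (hxu : ⟪x, c⟫ = ⟪u, c⟫) :
    {y : E | ⟪y, c⟫ = ⟪u, c⟫} = {y : E | ∃ t : ℝ, y = x + t • (u - x)} := by
  ext y
  constructor
  · intro (hy : ⟪y, c⟫ = ⟪u, c⟫)
    have hcy : ⟪c, y - x⟫ = 0 := by rw [real_inner_comm, inner_sub_left, hy, hxu, sub_self]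
    have hcu : ⟪c, u - x⟫ = 0 := by rw [real_inner_comm, inner_sub_left, hxu, sub_self]
    obtain ⟨t, ht⟩ := Submodule.mem_span_singleton.1
      (Submodule.mem_span_singleton_of_inner_eq_zero_of_inner_eq_zero hc hux hcy hcu)
    exact ⟨t, by rw [ht, add_sub_cancel]⟩
  · rintro ⟨t, rfl⟩
    simp only [Set.mem_ofPred_eq, inner_add_left, real_inner_smul_left, inner_sub_left, hxu,
      sub_self, mul_zero, add_zero]

theorem stmt10_general (S : Finset (EuclideanSpace ℝ (Fin 2))) (x : EuclideanSpace ℝ (Fin 2))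
    (hthrough : ∀ (c : EuclideanSpace ℝ (Fin 2)) (lam : ℝ), c ≠ 0 →
      IsPerfectEven S c lam → ⟪x, c⟫ = lam)
    (hbal : ∀ (c : EuclideanSpace ℝ (Fin 2)) (lam : ℝ) (v : EuclideanSpace ℝ (Fin 2)),
      c ≠ 0 → v ≠ 0 → IsPerfectEven S c lam →
      ({y : EuclideanSpace ℝ (Fin 2) | ⟪y, c⟫ = lam} =
        {y : EuclideanSpace ℝ (Fin 2) | ∃ t : ℝ, y = x + t • v}) →
      rayCount S x v = rayCount S x (-v)) :
    IsWinningPoint S x ∧ ∃ a, IsWinningPoint S a := by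
  have : Fact (finrank ℝ (EuclideanSpace ℝ (Fin 2)) = 2) := ⟨finrank_euclideanSpace_fin⟩
  have hwin : IsWinningPoint S x := by
    refine isWinningPoint_of_forall_two_mul_card_le fun c => ?_
    have hrays : ∀ u ∈ S, 0 < ⟪u - x, c⟫ → rayCount S x (u - x) = rayCount S x (-(u - x)) := by
      intro u hu hpos
      have hux : u - x ≠ 0 := fun h => by simp [h] at hpos
      obtain ⟨c', hc', hperf⟩ := exists_isPerfectEven_through_mem one_lt_two hu
      exact hbal c' _ (u - x) hc' hux hperf
        (setOf_inner_eq_eq_setOf_add_smul hc' hux (hthrough c' _ hc' hperf))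
    have hdepth := card_filter_inner_pos_le_of_rayCount_eq hrays
    have hsides := card_filter_lt_add_card_filter_gt S (fun _ => 0) (fun y => ⟪y - x, c⟫)
    have := card_filter_le S fun y => (0 : ℝ) ≠ ⟪y - x, c⟫
    omega
  exact ⟨hwin, x, hwin⟩

/-- let `S` be a set of `2n` points in `ℝ²` and `x ∉ S` a point such that every
perfect line contains `x` and every perfect line is even-balanced about `x`.  Then `x` is a
winning point for Alice; in particular Alice wins. -/
theorem stmt10 (n : ℕ) (hn : 1 ≤ n) (S : Finset (EuclideanSpace ℝ (Fin 2)))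
    (hcard : S.card = 2 * n) (x : EuclideanSpace ℝ (Fin 2)) (hx : x ∉ S)
    (hthrough : ∀ (c : EuclideanSpace ℝ (Fin 2)) (lam : ℝ), c ≠ 0 →
      IsPerfectEven S c lam → ⟪x, c⟫ = lam)
    (hbal : ∀ (c : EuclideanSpace ℝ (Fin 2)) (lam : ℝ) (v : EuclideanSpace ℝ (Fin 2)),
      c ≠ 0 → v ≠ 0 → IsPerfectEven S c lam →
      ({y : EuclideanSpace ℝ (Fin 2) | ⟪y, c⟫ = lam} =
        {y : EuclideanSpace ℝ (Fin 2) | ∃ t : ℝ, y = x + t • v}) →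
      rayCount S x v = rayCount S x (-v)) :
    IsWinningPoint S x ∧ ∃ a, IsWinningPoint S a :=
  stmt10_general S x hthrough hbal
end

section
/- Let d ≥ 2, let S be a finite set of points in ℝ^d, let a ∈ ℝ^d, and let 1 ≤ j ≤ d−1. Let K be an affine subspace of ℝ^d of dimension j with a ∈ K, let K' be an affine subspace of dimension j−1 with a ∈ K' ⊆ K, and let K⁺ be one of the two connected components of K ∖ K'. Let H be an affine hyperplane with K ⊆ H, and let H⁺ be one of the two open half-spaces determined by H. Then there exists b ∈ ℝ^d such that ‖b−x‖ < ‖a−x‖ for every x ∈ S ∩ (H⁺ ∪ K⁺); i.e., Bob can claim all the points of S that belong to H⁺ ∪ K⁺. -/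
/-!
Moving `a` a short distance in a direction `w` gives a point strictly closer to every point `x`
with `⟪w, x - a⟫ > 0`, so it suffices to find one `w` with this property on `S ∩ (H⁺ ∪ K⁺)`.
Since `K'` has codimension one in `K`, some linear functional `⟪u, · - a⟫` vanishes on `K` exactly
along `K'`; being connected, `K⁺` lies on one side of it, which after a sign change is
`⟪u, · - a⟫ > 0`. The normal `c` of `H` is positive on `H⁺ - a` and zero on `K⁺ - a`, so
`w = c + C • u` with `C > 0` small enough works for the finitely many points of `S`.
-/

open scoped RealInnerProductSpace Topology
open Filter Module

variable {E : Type*} [NormedAddCommGroup E] [InnerProductSpace ℝ E]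

theorem eventually_dist_add_smul_lt {a x w : E} (h : 0 < ⟪w, x - a⟫) :
    ∀ᶠ ε in 𝓝[>] (0 : ℝ), dist (a + ε • w) x < dist a x := by
  have hsmall : ∀ᶠ ε in 𝓝[>] (0 : ℝ), ε * ‖w‖ ^ 2 < 2 * ⟪w, x - a⟫ :=
    ((continuous_id.mul continuous_const).tendsto' (0 : ℝ) 0 (zero_mul _)).eventually_lt_const
      (by positivity) |>.filter_mono nhdsWithin_le_nhds
  filter_upwards [hsmall, self_mem_nhdsWithin] with ε hε (hε0 : 0 < ε)
  have hexpand : ‖a + ε • w - x‖ ^ 2 = ‖a - x‖ ^ 2 - ε * (2 * ⟪w, x - a⟫ - ε * ‖w‖ ^ 2) := by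
    rw [show a + ε • w - x = ε • w - (x - a) by abel, norm_sub_sq_real, norm_smul,
      real_inner_smul_left, mul_pow, Real.norm_eq_abs, sq_abs, norm_sub_rev]
    ring
  rw [dist_eq_norm, dist_eq_norm, ← sq_lt_sq₀ (norm_nonneg _) (norm_nonneg _), hexpand]
  nlinarith

theorem Set.Finite.exists_dist_lt_of_inner_sub_pos {s : Set E} (hs : s.Finite) {a w : E}
    (hw : ∀ x ∈ s, 0 < ⟪w, x - a⟫) : ∃ b : E, ∀ x ∈ s, dist b x < dist a x :=
  let ⟨ε, hε⟩ := ((eventually_all_finite hs).2 fun x hx =>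
    eventually_dist_add_smul_lt (hw x hx)).exists
  ⟨a + ε • w, hε⟩

theorem Set.Finite.exists_inner_sub_pos_of_lex {s : Set E} (hs : s.Finite) {a c u : E}
    (h : ∀ x ∈ s, 0 < ⟪c, x - a⟫ ∨ (⟪c, x - a⟫ = 0 ∧ 0 < ⟪u, x - a⟫)) :
    ∃ w : E, ∀ x ∈ s, 0 < ⟪w, x - a⟫ := by
  have htilt : ∀ᶠ C in 𝓝[>] (0 : ℝ), ∀ x ∈ s, 0 < ⟪c + C • u, x - a⟫ := by
    refine (eventually_all_finite hs).2 fun x hx => ?_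
    simp only [inner_add_left, real_inner_smul_left]
    rcases h x hx with hc | ⟨hc, hu⟩
    · have hcont : Continuous fun C : ℝ => ⟪c, x - a⟫ + C * ⟪u, x - a⟫ := by fun_prop
      exact (hcont.tendsto' 0 _ (by simp)).eventually_const_lt hc |>.filter_mono
        nhdsWithin_le_nhds
    · filter_upwards [self_mem_nhdsWithin] with C (hC : 0 < C)
      rw [hc, zero_add]
      exact mul_pos hC hu
  obtain ⟨C, hC⟩ := htilt.exists
  exact ⟨c + C • u, hC⟩

theorem Submodule.exists_inner_ne_zero_of_finrank_eq_succ {W V : Submodule ℝ E}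
    [FiniteDimensional ℝ V] (hWV : W ≤ V) (hdim : finrank ℝ V = finrank ℝ W + 1) :
    ∃ u : E, ∀ x ∈ V, x ∉ W → ⟪u, x⟫ ≠ 0 := by
  have : FiniteDimensional ℝ W := Submodule.finiteDimensional_of_le hWV
  have hL : finrank ℝ (Wᗮ ⊓ V : Submodule ℝ E) = 1 :=
    Submodule.finrank_add_inf_finrank_orthogonal' hWV hdim.symm
  obtain ⟨u, huL, hu0⟩ := Submodule.exists_mem_ne_zero_of_ne_bot (p := Wᗮ ⊓ V)
    (fun hbot => by rw [hbot, finrank_bot] at hL; exact zero_ne_one hL)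
  refine ⟨u, fun x hxV hxW hux => hxW ?_⟩
  rw [← Submodule.sup_orthogonal_inf_of_hasOrthogonalProjection hWV,
    eq_span_singleton_of_mem_of_finrank_eq_one hL huL hu0] at hxV
  obtain ⟨y, hyW, _, hl, rfl⟩ := Submodule.mem_sup.1 hxV
  obtain ⟨t, rfl⟩ := Submodule.mem_span_singleton.1 hl
  rw [inner_add_right, Submodule.inner_left_of_mem_orthogonal hyW huL.1, zero_add,
    real_inner_smul_right, real_inner_self_eq_norm_sq] at hux
  obtain rfl : t = 0 := by simpa [hu0] using hux
  simpa using hyW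

theorem IsPreconnected.forall_pos_or_forall_neg {X : Type*} [TopologicalSpace X] {s : Set X}
    (hs : IsPreconnected s) {f : X → ℝ} (hf : ContinuousOn f s) (h0 : ∀ x ∈ s, f x ≠ 0) :
    (∀ x ∈ s, 0 < f x) ∨ ∀ x ∈ s, f x < 0 := by
  by_contra! ⟨⟨x, hx, hfx⟩, y, hy, hfy⟩
  obtain ⟨z, hz, hfz⟩ := hs.intermediate_value hx hy hf ⟨hfx, hfy⟩
  exact h0 z hz hfz

theorem AffineSubspace.exists_inner_vsub_pos_of_mem_connectedComponentIn
    {K K' : AffineSubspace ℝ E} [FiniteDimensional ℝ K.direction] (hK'K : K' ≤ K) {a z : E}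
    (haK' : a ∈ K') (hdim : finrank ℝ K.direction = finrank ℝ K'.direction + 1) :
    ∃ u : E, ∀ x ∈ connectedComponentIn ((K : Set E) \ K') z, 0 < ⟪u, x - a⟫ := by
  obtain ⟨u, hu⟩ := Submodule.exists_inner_ne_zero_of_finrank_eq_succ
    (AffineSubspace.direction_le hK'K) hdim
  have hne : ∀ x ∈ connectedComponentIn ((K : Set E) \ K') z, ⟪u, x - a⟫ ≠ 0 := by
    intro x hx
    obtain ⟨hxK, hxK'⟩ := connectedComponentIn_subset _ _ hx
    refine hu _ (K.vsub_mem_direction hxK (hK'K haK')) fun hxa => hxK' ?_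
    exact (AffineSubspace.vsub_right_mem_direction_iff_mem haK' x).1 hxa
  rcases isPreconnected_connectedComponentIn.forall_pos_or_forall_neg
    (by fun_prop) hne with hpos | hneg
  · exact ⟨u, hpos⟩
  · exact ⟨-u, fun x hx => by simpa [inner_neg_left] using hneg x hx⟩

theorem stmt11_general (d : ℕ) (S : Finset (EuclideanSpace ℝ (Fin d)))
    (a : EuclideanSpace ℝ (Fin d)) (j : ℕ) (hj1 : 1 ≤ j)
    (K K' : AffineSubspace ℝ (EuclideanSpace ℝ (Fin d)))
    (hKdim : Module.finrank ℝ K.direction = j)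
    (hK'dim : Module.finrank ℝ K'.direction = j - 1)
    (haK' : a ∈ K') (hK'K : K' ≤ K)
    (Kplus : Set (EuclideanSpace ℝ (Fin d)))
    (hKplus : ∃ z ∈ (K : Set (EuclideanSpace ℝ (Fin d))) \ K',
      Kplus = connectedComponentIn ((K : Set (EuclideanSpace ℝ (Fin d))) \ K') z)
    (c : EuclideanSpace ℝ (Fin d)) (lam : ℝ)
    (hKH : (K : Set (EuclideanSpace ℝ (Fin d))) ⊆ {y | ⟪y, c⟫ = lam}) :
    ∃ b : EuclideanSpace ℝ (Fin d), ∀ x ∈ S,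
      (lam < ⟪x, c⟫ ∨ x ∈ Kplus) → dist b x < dist a x := by
  obtain ⟨z, hz, rfl⟩ := hKplus
  obtain ⟨u, hu⟩ := AffineSubspace.exists_inner_vsub_pos_of_mem_connectedComponentIn hK'K haK'
    (z := z) (by omega)
  have hca : ∀ x, ⟪c, x - a⟫ = ⟪x, c⟫ - lam := fun x => by
    rw [real_inner_comm, inner_sub_left, hKH (hK'K haK')]
  set s := {x ∈ (S : Set (EuclideanSpace ℝ (Fin d))) |
    lam < ⟪x, c⟫ ∨ x ∈ connectedComponentIn ((K : Set (EuclideanSpace ℝ (Fin d))) \ K') z}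
  have hs : s.Finite := S.finite_toSet.sep _
  obtain ⟨w, hw⟩ := hs.exists_inner_sub_pos_of_lex
    fun x ⟨_, hx⟩ => by
      rcases hx with hH | hKx
      · exact .inl (by linarith [hca x])
      · exact .inr ⟨by rw [hca, hKH (connectedComponentIn_subset _ _ hKx).1, sub_self], hu x hKx⟩
  obtain ⟨b, hb⟩ := hs.exists_dist_lt_of_inner_sub_pos hw
  exact ⟨b, fun x hx hP => hb x ⟨hx, hP⟩⟩

/-- let `K` be a `j`-dimensional affine subspace through `a`, `K'` a
`(j-1)`-dimensional affine subspace through `a` contained in `K`, `K⁺` one of the two connected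
components of `K \ K'`, and `H = {y | ⟪y,c⟫ = lam}` a hyperplane containing `K`, with open
half-space `H⁺ = {y | ⟪y,c⟫ > lam}`.  Then Bob can claim every point of `S ∩ (H⁺ ∪ K⁺)`:
there is `b` strictly closer than `a` to all such points. -/
theorem stmt11 (d : ℕ) (hd : 2 ≤ d) (S : Finset (EuclideanSpace ℝ (Fin d)))
    (a : EuclideanSpace ℝ (Fin d)) (j : ℕ) (hj1 : 1 ≤ j) (hj2 : j ≤ d - 1)
    (K K' : AffineSubspace ℝ (EuclideanSpace ℝ (Fin d)))
    (hKdim : Module.finrank ℝ K.direction = j)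
    (hK'dim : Module.finrank ℝ K'.direction = j - 1)
    (haK' : a ∈ K') (hK'K : K' ≤ K)
    (Kplus : Set (EuclideanSpace ℝ (Fin d)))
    (hKplus : ∃ z ∈ (K : Set (EuclideanSpace ℝ (Fin d))) \ K',
      Kplus = connectedComponentIn ((K : Set (EuclideanSpace ℝ (Fin d))) \ K') z)
    (c : EuclideanSpace ℝ (Fin d)) (lam : ℝ) (hc : c ≠ 0)
    (hKH : (K : Set (EuclideanSpace ℝ (Fin d))) ⊆ {y | ⟪y, c⟫ = lam}) :
    ∃ b : EuclideanSpace ℝ (Fin d), ∀ x ∈ S,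
      (lam < ⟪x, c⟫ ∨ x ∈ Kplus) → dist b x < dist a x :=
  stmt11_general d S a j hj1 K K' hKdim hK'dim haK' hK'K Kplus hKplus c lam hKH
end

section
/- Let d ≥ 2 and let L be a finite set of one-dimensional linear subspaces of ℝ^d with |L| ≥ 3. Suppose that no two-dimensional linear subspace of ℝ^d contains exactly two members of L. Then there exists a two-dimensional linear subspace of ℝ^d containing every member of L. -/
/-!
Pick a linear functional `φ` vanishing on none of the lines; each line `l` then meets the affine
hyperplane `φ = 1` in a single point `x l`, and a plane through the origin meets it in an affine
line. The hypothesis says that every affine line through two of these points contains a third, so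
by the Sylvester–Gallai theorem all of them lie on one affine line, whose span is the required
plane.

Sylvester–Gallai is proved by Kelly's argument. Among the triples `(p, x, y)` with `p` off the
line `xy`, take one minimizing the distance from `p` to `xy`, and let `f` be the foot of the
perpendicular. Of the three points of the set on `xy`, two, `a ≠ b`, satisfy `a ∈ [f, b]`; then
`a` is strictly closer to the line `pb` than `p` is to `xy`.
-/

open scoped Classical

open Module RealInnerProductSpace

section Affine

variable {k V P : Type*} [Field k] [AddCommGroup V] [Module k V] [AddTorsor V P]

lemma collinear_of_forall_mem_affineSpan_pair {s : Set P}
    (h : ∀ x ∈ s, ∀ y ∈ s, x ≠ y → ∀ z ∈ s, z ∈ line[k, x, y]) : Collinear k s := by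
  rcases s.subsingleton_or_nontrivial with hs | ⟨x, hx, y, hy, hxy⟩
  · rcases hs.eq_empty_or_singleton with rfl | ⟨x, rfl⟩
    exacts [collinear_empty k P, collinear_singleton k x]
  · have hline : Collinear k (line[k, x, y] : Set P) := by
      rw [Collinear, ← direction_affineSpan, AffineSubspace.affineSpan_coe, direction_affineSpan]
      exact collinear_pair k x y
    exact hline.subset fun z hz => h x hx y hy hxy z hz

lemma notMem_affineSpan_pair_of_mem_of_notMem {ℓ : AffineSubspace k P} {p a b : P}
    (ha : a ∈ ℓ) (hb : b ∈ ℓ) (hab : a ≠ b) (hp : p ∉ ℓ) : a ∉ line[k, p, b] := by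
  intro h
  have hpab : p ∈ line[k, a, b] :=
    (collinear_insert_of_mem_affineSpan_pair h).mem_affineSpan_of_mem_of_ne
      (by simp) (by simp) (by simp) hab
  exact hp (affineSpan_pair_le_of_mem_of_mem ha hb hpab)

end Affine

section Real

lemma mem_uIcc_zero_or_of_mul_nonneg {a b : ℝ} (h : 0 ≤ a * b) :
    a ∈ Set.uIcc 0 b ∨ b ∈ Set.uIcc 0 a := by
  rcases lt_trichotomy a 0 with ha | rfl | ha
  · have hb : b ≤ 0 := nonpos_of_mul_nonneg_right h ha
    rw [Set.uIcc_of_ge hb, Set.uIcc_of_ge ha.le]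
    rcases le_total a b with hab | hab
    · exact Or.inr ⟨hab, hb⟩
    · exact Or.inl ⟨hab, ha.le⟩
  · exact Or.inl Set.left_mem_uIcc
  · have hb : 0 ≤ b := nonneg_of_mul_nonneg_right h ha
    rw [Set.uIcc_of_le hb, Set.uIcc_of_le ha.le]
    rcases le_total a b with hab | hab
    · exact Or.inl ⟨ha.le, hab⟩
    · exact Or.inr ⟨hb, hab⟩

lemma exists_ne_mem_uIcc_zero {r₁ r₂ r₃ : ℝ} (h₁₂ : r₁ ≠ r₂) (h₁₃ : r₁ ≠ r₃) (h₂₃ : r₂ ≠ r₃) :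
    ∃ s ∈ ({r₁, r₂, r₃} : Set ℝ), ∃ t ∈ ({r₁, r₂, r₃} : Set ℝ), s ≠ t ∧ s ∈ Set.uIcc 0 t := by
  have key : 0 ≤ r₁ * r₂ ∨ 0 ≤ r₁ * r₃ ∨ 0 ≤ r₂ * r₃ := by
    by_contra! h
    nlinarith [mul_pos_of_neg_of_neg h.1 h.2.1, sq_nonneg r₁]
  rcases key with h | h | h <;> rcases mem_uIcc_zero_or_of_mul_nonneg h with h' | h' <;>
    first
    | exact ⟨_, by simp, _, by simp, by assumption, h'⟩
    | exact ⟨_, by simp, _, by simp, Ne.symm (by assumption), h'⟩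

lemma sub_sq_le_sq_of_mem_uIcc_zero {s t : ℝ} (h : s ∈ Set.uIcc 0 t) : (t - s) ^ 2 ≤ t ^ 2 := by
  rcases Set.mem_uIcc.mp h with ⟨h₁, h₂⟩ | ⟨h₁, h₂⟩ <;> nlinarith

end Real

section SylvesterGallai

variable {V : Type*} [NormedAddCommGroup V] [InnerProductSpace ℝ V]

lemma infDist_add_smul_lt_norm {f v w : V} (hvw : ⟪v, w⟫ = 0) (hv : v ≠ 0) {s t : ℝ}
    (hst : s ∈ Set.uIcc 0 t) :
    Metric.infDist (f + s • w) (line[ℝ, f + v, f + t • w] : Set V) < ‖v‖ := by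
  set W := ‖w‖ ^ 2
  set N := ‖v‖ ^ 2
  have hN : 0 < N := by positivity
  have hD : 0 < t ^ 2 * W + N := by positivity
  -- the parameter of the foot of the perpendicular from `f + s • w` to the line
  set τ := t * (t - s) * W / (t ^ 2 * W + N)
  have hmem := smul_vsub_rev_vadd_mem_affineSpan_pair τ (f + v) (f + t • w)
  have hdiff : f + s • w - (τ • (f + v - (f + t • w)) + (f + t • w)) =
      (s - t + τ * t) • w - τ • v := by
    simp only [smul_sub, smul_add, sub_smul, add_smul, mul_smul]
    abel
  have hsq : ‖(s - t + τ * t) • w - τ • v‖ ^ 2 = (s - t) ^ 2 * W * N / (t ^ 2 * W + N) := by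
    rw [norm_sub_sq_real, inner_smul_left, inner_smul_right, real_inner_comm, hvw,
      norm_smul, norm_smul]
    simp only [Real.norm_eq_abs, mul_pow, sq_abs, τ]
    field_simp
    ring
  calc Metric.infDist (f + s • w) (line[ℝ, f + v, f + t • w] : Set V)
      ≤ ‖(s - t + τ * t) • w - τ • v‖ := by
        rw [← hdiff, ← dist_eq_norm]
        exact Metric.infDist_le_dist_of_mem hmem
    _ < ‖v‖ := by
        refine lt_of_pow_lt_pow_left₀ 2 (norm_nonneg v) ?_
        rw [hsq, div_lt_iff₀ hD]
        calc (s - t) ^ 2 * W * N = (t - s) ^ 2 * (W * N) := by ring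
          _ ≤ t ^ 2 * (W * N) :=
            mul_le_mul_of_nonneg_right (sub_sq_le_sq_of_mem_uIcc_zero hst) (by positivity)
          _ < N * (t ^ 2 * W + N) := by nlinarith

lemma exists_eq_add_smul_sub_of_mem_affineSpan_pair {x y f z : V} (hf : f ∈ line[ℝ, x, y])
    (hz : z ∈ line[ℝ, x, y]) : ∃ r : ℝ, z = f + r • (y - x) := by
  have h := AffineSubspace.vsub_mem_direction hz hf
  rw [direction_affineSpan, vectorSpan_pair_rev, Submodule.mem_span_singleton] at h
  obtain ⟨r, hr⟩ := h
  exact ⟨r, sub_eq_iff_eq_add'.mp hr.symm⟩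

lemma exists_notMem_affineSpan_pair_infDist_lt {S : Set V}
    (hS : ∀ x ∈ S, ∀ y ∈ S, x ≠ y → ∃ z ∈ S, z ≠ x ∧ z ≠ y ∧ z ∈ line[ℝ, x, y])
    {p x y : V} (hx : x ∈ S) (hy : y ∈ S) (hxy : x ≠ y) (hp : p ∉ line[ℝ, x, y]) :
    ∃ a ∈ S, ∃ b ∈ S, p ≠ b ∧ a ∉ line[ℝ, p, b] ∧
      Metric.infDist a (line[ℝ, p, b] : Set V) < Metric.infDist p (line[ℝ, x, y] : Set V) := by
  obtain ⟨c, hc, hcx, hcy, hcℓ⟩ := hS x hx y hy hxy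
  set ℓ := line[ℝ, x, y]
  have hxℓ : x ∈ ℓ := left_mem_affineSpan_pair ℝ x y
  have hyℓ : y ∈ ℓ := right_mem_affineSpan_pair ℝ x y
  have : Nonempty ℓ := ⟨⟨x, hxℓ⟩⟩
  set f : V := ↑(EuclideanGeometry.orthogonalProjection ℓ p)
  have hfℓ : f ∈ ℓ := EuclideanGeometry.orthogonalProjection_mem p
  have hperp : ⟪p - f, y - x⟫ = 0 :=
    Submodule.inner_left_of_mem_orthogonal (AffineSubspace.vsub_mem_direction hyℓ hxℓ)
      (EuclideanGeometry.vsub_orthogonalProjection_mem_direction_orthogonal ℓ p)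
  have hpf : p - f ≠ 0 := sub_ne_zero.mpr fun h => hp (h ▸ hfℓ)
  have hdist : Metric.infDist p (ℓ : Set V) = ‖p - f‖ := by
    rw [← EuclideanGeometry.dist_orthogonalProjection_eq_infDist, dist_eq_norm]
  set w := y - x
  have hw : w ≠ 0 := sub_ne_zero.mpr hxy.symm
  obtain ⟨r₁, hr₁⟩ := exists_eq_add_smul_sub_of_mem_affineSpan_pair hfℓ hxℓ
  obtain ⟨r₂, hr₂⟩ := exists_eq_add_smul_sub_of_mem_affineSpan_pair hfℓ hyℓ
  obtain ⟨r₃, hr₃⟩ := exists_eq_add_smul_sub_of_mem_affineSpan_pair hfℓ hcℓ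
  have hmem : ∀ r ∈ ({r₁, r₂, r₃} : Set ℝ), f + r • w ∈ S ∧ f + r • w ∈ ℓ := by
    rintro r (rfl | rfl | rfl)
    exacts [hr₁ ▸ ⟨hx, hxℓ⟩, hr₂ ▸ ⟨hy, hyℓ⟩, hr₃ ▸ ⟨hc, hcℓ⟩]
  obtain ⟨s, hs, t, ht, hst, hs0t⟩ : ∃ s ∈ ({r₁, r₂, r₃} : Set ℝ), ∃ t ∈ ({r₁, r₂, r₃} : Set ℝ),
      s ≠ t ∧ s ∈ Set.uIcc 0 t := by
    refine exists_ne_mem_uIcc_zero ?_ ?_ ?_ <;> rintro rfl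
    exacts [hxy (hr₁.trans hr₂.symm), hcx (hr₃.trans hr₁.symm), hcy (hr₃.trans hr₂.symm)]
  have hab : f + s • w ≠ f + t • w := fun h => hst (smul_left_injective ℝ hw (add_left_cancel h))
  refine ⟨_, (hmem s hs).1, _, (hmem t ht).1, fun h => hp (h ▸ (hmem t ht).2),
    notMem_affineSpan_pair_of_mem_of_notMem (hmem s hs).2 (hmem t ht).2 hab hp, ?_⟩
  rw [hdist]
  simpa only [add_sub_cancel] using infDist_add_smul_lt_norm (f := f) hperp hpf hs0t

theorem collinear_of_forall_exists_third_mem_affineSpan_pair {S : Set V} (hfin : S.Finite)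
    (hS : ∀ x ∈ S, ∀ y ∈ S, x ≠ y → ∃ z ∈ S, z ≠ x ∧ z ≠ y ∧ z ∈ line[ℝ, x, y]) :
    Collinear ℝ S := by
  by_contra hcol
  set T : Set (V × V × V) :=
    {q | q.1 ∈ S ∧ q.2.1 ∈ S ∧ q.2.2 ∈ S ∧ q.2.1 ≠ q.2.2 ∧ q.1 ∉ line[ℝ, q.2.1, q.2.2]}
  have hTfin : T.Finite :=
    (hfin.prod (hfin.prod hfin)).subset fun q hq => ⟨hq.1, hq.2.1, hq.2.2.1⟩
  have hTne : T.Nonempty := by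
    by_contra hT
    refine hcol (collinear_of_forall_mem_affineSpan_pair fun x hx y hy hxy z hz => ?_)
    by_contra hzℓ
    exact hT ⟨(z, x, y), hz, hx, hy, hxy, hzℓ⟩
  obtain ⟨⟨p, x, y⟩, ⟨hp, hx, hy, hxy, hpℓ⟩, hmin⟩ :=
    T.exists_min_image (fun q => Metric.infDist q.1 (line[ℝ, q.2.1, q.2.2] : Set V)) hTfin hTne
  obtain ⟨a, ha, b, hb, hpb, haℓ, hlt⟩ :=
    exists_notMem_affineSpan_pair_infDist_lt hS hx hy hxy hpℓ
  exact (hmin (a, p, b) ⟨ha, hp, hb, hpb, haℓ⟩).not_gt hlt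

end SylvesterGallai

section Lines

variable {K V : Type*} [DivisionRing K] [AddCommGroup V] [Module K V]

lemma finrank_sup_eq_two {l₁ l₂ : Submodule K V} (h₁ : finrank K l₁ = 1) (h₂ : finrank K l₂ = 1)
    (hne : l₁ ≠ l₂) : finrank K ↥(l₁ ⊔ l₂) = 2 := by
  have : FiniteDimensional K l₁ := .of_finrank_eq_succ h₁
  have : FiniteDimensional K l₂ := .of_finrank_eq_succ h₂
  have hinf : l₁ ⊓ l₂ = ⊥ := (IsAtom.disjoint_of_ne (Submodule.isAtom_iff_finrank_eq_one.mpr h₁)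
    (Submodule.isAtom_iff_finrank_eq_one.mpr h₂) hne).eq_bot
  have := Submodule.finrank_sup_add_finrank_inf_eq l₁ l₂
  rw [hinf, finrank_bot, h₁, h₂] at this
  omega

lemma exists_mem_ne_le_sup_of_forall_card_filter_ne_two {L : Finset (Submodule K V)}
    (hdim : ∀ l ∈ L, finrank K l = 1)
    (hno2 : ∀ P : Submodule K V, finrank K P = 2 → (L.filter fun l => l ≤ P).card ≠ 2)
    {l₁ l₂ : Submodule K V} (hl₁ : l₁ ∈ L) (hl₂ : l₂ ∈ L) (hne : l₁ ≠ l₂) :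
    ∃ l ∈ L, l ≠ l₁ ∧ l ≠ l₂ ∧ l ≤ l₁ ⊔ l₂ := by
  have hsub : {l₁, l₂} ⊆ L.filter fun l => l ≤ l₁ ⊔ l₂ := by
    simp [Finset.insert_subset_iff, hl₁, hl₂]
  have hlt : ({l₁, l₂} : Finset _).card < (L.filter fun l => l ≤ l₁ ⊔ l₂).card := by
    refine (Finset.card_le_card hsub).lt_of_ne ?_
    rw [Finset.card_pair hne]
    exact (hno2 _ (finrank_sup_eq_two (hdim l₁ hl₁) (hdim l₂ hl₂) hne)).symm
  obtain ⟨l, hl, hnot⟩ := Finset.exists_mem_notMem_of_card_lt_card hlt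
  simp only [Finset.mem_filter, Finset.mem_insert, Finset.mem_singleton, not_or] at hl hnot
  exact ⟨l, hl.1, hnot.1, hnot.2, hl.2⟩

end Lines

section Hyperplane

variable {K V : Type*} [Field K] [AddCommGroup V] [Module K V]

lemma exists_dual_forall_span_eq_and_apply_eq_one [Infinite K] {L : Finset (Submodule K V)}
    (hdim : ∀ l ∈ L, finrank K l = 1) :
    ∃ (φ : Dual K V) (x : Submodule K V → V), ∀ l ∈ L, K ∙ x l = l ∧ φ (x l) = 1 := by
  have : ∀ l ∈ L, ∃ u ∈ l, u ≠ 0 := fun l hl => Submodule.exists_mem_ne_zero_of_ne_bot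
    (Submodule.isAtom_iff_finrank_eq_one.mpr (hdim l hl)).ne_bot
  choose! u hul hu0 using this
  obtain ⟨φ, hφ⟩ := Module.exists_dual_forall_apply_ne_zero (K := K) (fun l : L => u l)
    fun l => hu0 l l.2
  refine ⟨φ, fun l => (φ (u l))⁻¹ • u l, fun l hl => ⟨?_, ?_⟩⟩
  · rw [Submodule.span_singleton_smul_eq (inv_ne_zero (hφ ⟨l, hl⟩)).isUnit]
    exact (eq_span_singleton_of_mem_of_finrank_eq_one (hdim l hl) (hul l hl) (hu0 l hl)).symm
  · rw [map_smul, smul_eq_mul, inv_mul_cancel₀ (hφ ⟨l, hl⟩)]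

lemma mem_affineSpan_pair_of_mem_sup_span_singleton {φ : Dual K V} {x y z : V} (hx : φ x = 1)
    (hy : φ y = 1) (hz : φ z = 1) (h : z ∈ (K ∙ x) ⊔ (K ∙ y)) : z ∈ line[K, x, y] := by
  rw [← Submodule.span_insert, Submodule.mem_span_pair] at h
  obtain ⟨a, b, rfl⟩ := h
  have hab : a + b = 1 := by simpa [hx, hy] using hz
  rw [mem_affineSpan_pair_iff_exists_lineMap_eq]
  refine ⟨b, ?_⟩
  rw [AffineMap.lineMap_apply_module, ← hab, add_sub_cancel_right]

end Hyperplane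

theorem stmt14_general (d : ℕ)
    (L : Finset (Submodule ℝ (EuclideanSpace ℝ (Fin d))))
    (hdim : ∀ l ∈ L, Module.finrank ℝ l = 1)
    (hL : 3 ≤ L.card)
    (hno2 : ∀ P : Submodule ℝ (EuclideanSpace ℝ (Fin d)), Module.finrank ℝ P = 2 →
      (L.filter fun l => l ≤ P).card ≠ 2) :
    ∃ P : Submodule ℝ (EuclideanSpace ℝ (Fin d)), Module.finrank ℝ P = 2 ∧
      ∀ l ∈ L, l ≤ P := by
  obtain ⟨φ, x, hx⟩ := exists_dual_forall_span_eq_and_apply_eq_one hdim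
  have hxinj : Set.InjOn x L := fun l hl l' hl' h => (hx l hl).1.symm.trans (h ▸ (hx l' hl').1)
  have hcol : Collinear ℝ (x '' L) := by
    refine collinear_of_forall_exists_third_mem_affineSpan_pair (L.finite_toSet.image x) ?_
    rintro _ ⟨l₁, hl₁, rfl⟩ _ ⟨l₂, hl₂, rfl⟩ hne
    obtain ⟨l, hl, h₁, h₂, hle⟩ :=
      exists_mem_ne_le_sup_of_forall_card_filter_ne_two hdim hno2 hl₁ hl₂ fun h => hne (h ▸ rfl)
    refine ⟨x l, ⟨l, hl, rfl⟩, fun h => h₁ (hxinj hl hl₁ h), fun h => h₂ (hxinj hl hl₂ h), ?_⟩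
    refine mem_affineSpan_pair_of_mem_sup_span_singleton (hx l₁ hl₁).2 (hx l₂ hl₂).2 (hx l hl).2 ?_
    rw [(hx l₁ hl₁).1, (hx l₂ hl₂).1]
    exact hle ((hx l hl).1.le (Submodule.mem_span_singleton_self (x l)))
  obtain ⟨l₁, hl₁, l₂, hl₂, hne⟩ := Finset.one_lt_card.mp (by omega : 1 < L.card)
  refine ⟨l₁ ⊔ l₂, finrank_sup_eq_two (hdim l₁ hl₁) (hdim l₂ hl₂) hne, fun l hl => ?_⟩
  have hxl : x l ∈ line[ℝ, x l₁, x l₂] := hcol.mem_affineSpan_of_mem_of_ne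
    ⟨l₁, hl₁, rfl⟩ ⟨l₂, hl₂, rfl⟩ ⟨l, hl, rfl⟩ (hxinj.ne hl₁ hl₂ hne)
  rw [← (hx l hl).1, Submodule.span_singleton_le_iff_mem]
  refine affineSpan_pair_le_of_mem_of_mem (s := (l₁ ⊔ l₂).toAffineSubspace) ?_ ?_ hxl
  · exact Submodule.mem_sup_left ((hx l₁ hl₁).1.le (Submodule.mem_span_singleton_self (x l₁)))
  · exact Submodule.mem_sup_right ((hx l₂ hl₂).1.le (Submodule.mem_span_singleton_self (x l₂)))

/-- corollary of Sylvester–Gallai: let `d ≥ 2` and let `L` be a finite set of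
one-dimensional linear subspaces (lines through the origin) of `ℝ^d` with `|L| ≥ 3`.  If no
two-dimensional linear subspace contains exactly two members of `L`, then some two-dimensional
linear subspace contains all members of `L`. -/
theorem stmt14 (d : ℕ) (hd : 2 ≤ d)
    (L : Finset (Submodule ℝ (EuclideanSpace ℝ (Fin d))))
    (hdim : ∀ l ∈ L, Module.finrank ℝ l = 1)
    (hL : 3 ≤ L.card)
    (hno2 : ∀ P : Submodule ℝ (EuclideanSpace ℝ (Fin d)), Module.finrank ℝ P = 2 →
      (L.filter fun l => l ≤ P).card ≠ 2) :
    ∃ P : Submodule ℝ (EuclideanSpace ℝ (Fin d)), Module.finrank ℝ P = 2 ∧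
      ∀ l ∈ L, l ≤ P :=
  stmt14_general d L hdim hL hno2
end
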